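/- arXiv:1202.3294 — 5 statements merged into one kernel-verified Lean document; each statement's English description precedes it below -/
import Mathlib

section
/- Let G₁=(V₁,E₁) and G₂=(V₂,E₂) be vertex-disjoint circuits in the simple (2,2)-sparsity matroid, and let vᵢ ∈ Vᵢ be a degree-3 vertex of Gᵢ with neighbours aᵢ, bᵢ, cᵢ (i = 1, 2). Then the 3-sum G₁ ⊕₃ G₂, obtained by deleting v₁ and v₂ (with their incident edges) and adding the three edges a₁a₂, b₁b₂, c₁c₂, is a circuit in the simple (2,2)-sparsity matroid. -/
variable {V : Type*}

/-- The number of edges of `G` induced by the vertex set `X`. -/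
noncomputable def indEdges (G : SimpleGraph V) (X : Set V) : ℕ :=
  {e ∈ G.edgeSet | ∀ v ∈ e, v ∈ X}.ncard

/-- A circuit in the simple (2,2)-sparsity matroid: `|E| = 2|V| - 1` and every proper
subset of vertices induces at most `2|X| - 2` edges. -/
def IsCircuit [Fintype V] (G : SimpleGraph V) : Prop :=
  (G.edgeSet.ncard : ℤ) = 2 * Fintype.card V - 1 ∧
  ∀ X : Finset V, X ⊂ Finset.univ → indEdges G ↑X ≤ 2 * X.card - 2

/-- The degree of a vertex. -/
noncomputable def deg (G : SimpleGraph V) (v : V) : ℕ := (G.neighborSet v).ncard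

lemma aux_set_eq_image {α β : Type*} (f : α → β) (P : α → α → Prop) :
    {e | ∃ x y, P x y ∧ e = s(f x, f y)} = Sym2.map f '' {e | ∃ x y, P x y ∧ e = s(x, y)} := by
  ext e
  constructor
  · rintro ⟨x, y, h, rfl⟩
    exact ⟨s(x, y), ⟨x, y, h, rfl⟩, rfl⟩
  · rintro ⟨e', ⟨x, y, h, rfl⟩, rfl⟩
    exact ⟨x, y, h, by simp⟩

lemma aux_ncard_pattern {α β : Type*} {f : α → β} (hf : Function.Injective f) (P : α → α → Prop) :
    {e | ∃ x y, P x y ∧ e = s(f x, f y)}.ncard = {e | ∃ x y, P x y ∧ e = s(x, y)}.ncard := by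
  rw [aux_set_eq_image f P, Set.ncard_image_of_injective _ (Sym2.map.injective hf)]

lemma aux_sym2_ne {α : Type*} {v a b : α} (hab : a ≠ b) : s(v, a) ≠ s(v, b) := by
  intro h
  rw [Sym2.eq_iff] at h
  rcases h with ⟨-, h⟩ | ⟨h1, h2⟩
  · exact hab h
  · exact hab (h2.trans h1)

lemma aux_ncard_triple {α : Type*} {x y z : α} (hxy : x ≠ y) (hxz : x ≠ z) (hyz : y ≠ z) :
    ({x, y, z} : Set α).ncard = 3 := by
  rw [Set.ncard_insert_of_notMem (by simp [hxy, hxz])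
      ((Set.finite_singleton z).insert y),
    Set.ncard_insert_of_notMem (by simp [hyz]) (Set.finite_singleton z),
    Set.ncard_singleton]

lemma aux_incidence {G : SimpleGraph V} {v a b c : V} (hN : G.neighborSet v = {a, b, c}) :
    {e ∈ G.edgeSet | v ∈ e} = {s(v, a), s(v, b), s(v, c)} := by
  have ha : G.Adj v a := by rw [← SimpleGraph.mem_neighborSet, hN]; simp
  have hb : G.Adj v b := by rw [← SimpleGraph.mem_neighborSet, hN]; simp
  have hc : G.Adj v c := by rw [← SimpleGraph.mem_neighborSet, hN]; simp
  ext e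
  induction e using Sym2.ind with
  | _ x y =>
    constructor
    · rintro ⟨hadj, hv⟩
      rw [G.mem_edgeSet] at hadj
      rw [Sym2.mem_iff] at hv
      rcases hv with rfl | rfl
      · have hm : y ∈ G.neighborSet v := hadj
        rw [hN] at hm
        rcases hm with rfl | rfl | rfl <;> simp
      · have hm : x ∈ G.neighborSet v := hadj.symm
        rw [hN] at hm
        rw [Sym2.eq_swap]
        rcases hm with rfl | rfl | rfl <;> simp
    · intro h
      rcases h with h | h | h <;> rw [h]
      · exact ⟨G.mem_edgeSet.mpr ha, by simp⟩
      · exact ⟨G.mem_edgeSet.mpr hb, by simp⟩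
      · exact ⟨G.mem_edgeSet.mpr hc, by simp⟩

lemma aux_edge_split [Fintype V] {G : SimpleGraph V} {v a b c : V}
    (hN : G.neighborSet v = {a, b, c}) (hab : a ≠ b) (hac : a ≠ c) (hbc : b ≠ c) :
    G.edgeSet.ncard = {e ∈ G.edgeSet | v ∉ e}.ncard + 3 := by
  classical
  have hsplit : G.edgeSet = {e ∈ G.edgeSet | v ∉ e} ∪ {e ∈ G.edgeSet | v ∈ e} := by
    ext e; by_cases hv : v ∈ e <;> simp [hv]
  have hdisj : Disjoint {e ∈ G.edgeSet | v ∉ e} {e ∈ G.edgeSet | v ∈ e} := by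
    rw [Set.disjoint_left]; rintro e ⟨-, h1⟩ ⟨-, h2⟩; exact h1 h2
  have h2 := Set.ncard_union_eq hdisj (Set.toFinite _) (Set.toFinite _)
  rw [← hsplit] at h2
  rw [h2, aux_incidence hN,
    aux_ncard_triple (aux_sym2_ne hab) (aux_sym2_ne hac) (aux_sym2_ne hbc)]

lemma aux_off_vertex (G : SimpleGraph V) (v : V) :
    {e ∈ G.edgeSet | v ∉ e} =
      {e | ∃ x y : {x : V // x ≠ v}, G.Adj ↑x ↑y ∧ e = s(↑x, ↑y)} := by
  ext e
  induction e using Sym2.ind with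
  | _ x y =>
    constructor
    · rintro ⟨hadj, hv⟩
      rw [G.mem_edgeSet] at hadj
      rw [Sym2.mem_iff] at hv
      push_neg at hv
      exact ⟨⟨x, fun h => hv.1 h.symm⟩, ⟨y, fun h => hv.2 h.symm⟩, hadj, rfl⟩
    · rintro ⟨x', y', hadj, he⟩
      rw [he]
      refine ⟨G.mem_edgeSet.mpr hadj, ?_⟩
      rw [Sym2.mem_iff]
      push_neg
      exact ⟨fun h => x'.2 h.symm, fun h => y'.2 h.symm⟩

lemma aux_count_side {α W : Type*} (G : SimpleGraph α) (v : α) (f : {x : α // x ≠ v} → W)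
    (hf : Function.Injective f) (Q : {x : α // x ≠ v} → Prop) :
    {e | ∃ x y : {x : α // x ≠ v}, (G.Adj ↑x ↑y ∧ Q x ∧ Q y) ∧ e = s(f x, f y)}.ncard
      = indEdges G (Subtype.val '' {x | Q x}) := by
  rw [aux_ncard_pattern hf (fun x y => G.Adj ↑x ↑y ∧ Q x ∧ Q y),
    ← aux_ncard_pattern Subtype.val_injective (fun x y => G.Adj ↑x ↑y ∧ Q x ∧ Q y),
    indEdges]
  congr 1
  ext e
  induction e using Sym2.ind with
  | _ u w =>
    constructor
    · rintro ⟨x, y, ⟨hadj, hxQ, hyQ⟩, he⟩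
      rw [he]
      refine ⟨G.mem_edgeSet.mpr hadj, ?_⟩
      rintro u hu
      rw [Sym2.mem_iff] at hu
      rcases hu with rfl | rfl
      · exact ⟨x, hxQ, rfl⟩
      · exact ⟨y, hyQ, rfl⟩
    · rintro ⟨hadj, hmem⟩
      rw [G.mem_edgeSet] at hadj
      obtain ⟨x, hxQ, hx⟩ := hmem u (Sym2.mem_mk_left u w)
      obtain ⟨y, hyQ, hy⟩ := hmem w (Sym2.mem_mk_right u w)
      subst hx hy
      exact ⟨x, y, ⟨hadj, hxQ, hyQ⟩, rfl⟩

lemma aux_side [Fintype V] [DecidableEq V] {G : SimpleGraph V}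
    (h : IsCircuit G) {Y : Set V} {v : V} (hv : v ∉ Y) :
    indEdges G Y ≤ 2 * Y.ncard - 2 := by
  have hfin : Y.Finite := Y.toFinite
  have hss : hfin.toFinset ⊂ Finset.univ := by
    rw [Finset.ssubset_univ_iff]
    intro hu
    have hm : v ∈ hfin.toFinset := by rw [hu]; exact Finset.mem_univ v
    exact hv (hfin.mem_toFinset.mp hm)
  have h2 := h.2 hfin.toFinset hss
  rwa [hfin.coe_toFinset, ← Set.ncard_eq_toFinset_card Y hfin] at h2

lemma aux_side_strong [Fintype V] [DecidableEq V] {G : SimpleGraph V}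
    (h : IsCircuit G) {Y : Set V} {v a b c w : V}
    (hv : v ∉ Y) (hN : G.neighborSet v = {a, b, c})
    (hab : a ≠ b) (hac : a ≠ c) (hbc : b ≠ c)
    (ha : a ∈ Y) (hb : b ∈ Y) (hc : c ∈ Y)
    (hw : w ∉ Y) (hwv : w ≠ v) :
    indEdges G Y + 3 ≤ 2 * (Y.ncard + 1) - 2 := by
  have hsplit : {e ∈ G.edgeSet | ∀ u ∈ e, u ∈ insert v Y} =
      {e ∈ G.edgeSet | ∀ u ∈ e, u ∈ Y} ∪ {e ∈ G.edgeSet | v ∈ e} := by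
    ext e
    induction e using Sym2.ind with
    | _ x y =>
      constructor
      · rintro ⟨hadj, hmem⟩
        by_cases hx : v ∈ s(x, y)
        · exact Or.inr ⟨hadj, hx⟩
        · refine Or.inl ⟨hadj, fun u hu => ?_⟩
          rcases hmem u hu with rfl | h'
          · exact absurd hu hx
          · exact h'
      · rintro (⟨hadj, hmem⟩ | ⟨hadj, hmem⟩)
        · exact ⟨hadj, fun u hu => Set.mem_insert_of_mem v (hmem u hu)⟩
        · refine ⟨hadj, fun u hu => ?_⟩
          rw [G.mem_edgeSet] at hadj
          rw [Sym2.mem_iff] at hu hmem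
          have hY : ∀ z : V, G.Adj v z → z ∈ Y := by
            intro z hz
            have : z ∈ G.neighborSet v := hz
            rw [hN] at this
            rcases this with rfl | rfl | rfl <;> assumption
          rcases hmem with rfl | rfl
          · rcases hu with rfl | rfl
            · exact Set.mem_insert u Y
            · exact Set.mem_insert_of_mem _ (hY u hadj)
          · rcases hu with rfl | rfl
            · exact Set.mem_insert_of_mem _ (hY u hadj.symm)
            · exact Set.mem_insert u Y
  have hdisj : Disjoint {e ∈ G.edgeSet | ∀ u ∈ e, u ∈ Y} {e ∈ G.edgeSet | v ∈ e} := by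
    rw [Set.disjoint_left]
    rintro e ⟨-, h1⟩ ⟨-, h2⟩
    exact hv (h1 v h2)
  have hZ : indEdges G (insert v Y) = indEdges G Y + 3 := by
    rw [indEdges, hsplit, Set.ncard_union_eq hdisj (Set.toFinite _) (Set.toFinite _),
      aux_incidence hN,
      aux_ncard_triple (aux_sym2_ne hab) (aux_sym2_ne hac) (aux_sym2_ne hbc), indEdges]
  have hbound : indEdges G (insert v Y) ≤ 2 * (insert v Y).ncard - 2 := by
    refine aux_side h (v := w) ?_
    rintro (rfl | h')
    · exact hwv rfl
    · exact hw h'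
  rwa [hZ, Set.ncard_insert_of_notMem hv (Set.toFinite _)] at hbound

/-- The 3-sum: delete the degree-3 vertices `v₁` of `G₁` and `v₂` of `G₂` (with their
incident edges) and add the three edges `a₁a₂`, `b₁b₂`, `c₁c₂`. -/
theorem three_sum_circuit {V₁ V₂ : Type*} [Fintype V₁] [Fintype V₂]
    [DecidableEq V₁] [DecidableEq V₂]
    (G₁ : SimpleGraph V₁) (G₂ : SimpleGraph V₂)
    (h₁ : IsCircuit G₁) (h₂ : IsCircuit G₂)
    (v₁ a₁ b₁ c₁ : V₁) (v₂ a₂ b₂ c₂ : V₂)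
    (ha₁ : a₁ ≠ v₁) (hb₁ : b₁ ≠ v₁) (hc₁ : c₁ ≠ v₁)
    (ha₂ : a₂ ≠ v₂) (hb₂ : b₂ ≠ v₂) (hc₂ : c₂ ≠ v₂)
    (hab₁ : a₁ ≠ b₁) (hac₁ : a₁ ≠ c₁) (hbc₁ : b₁ ≠ c₁)
    (hab₂ : a₂ ≠ b₂) (hac₂ : a₂ ≠ c₂) (hbc₂ : b₂ ≠ c₂)
    (hdeg₁ : deg G₁ v₁ = 3) (hN₁ : G₁.neighborSet v₁ = {a₁, b₁, c₁})
    (hdeg₂ : deg G₂ v₂ = 3) (hN₂ : G₂.neighborSet v₂ = {a₂, b₂, c₂}) :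
    IsCircuit (SimpleGraph.fromEdgeSet
      (({e | ∃ x y : {x : V₁ // x ≠ v₁}, G₁.Adj ↑x ↑y ∧ e = s(Sum.inl x, Sum.inl y)} :
          Set (Sym2 ({x : V₁ // x ≠ v₁} ⊕ {x : V₂ // x ≠ v₂}))) ∪
       {e | ∃ x y : {x : V₂ // x ≠ v₂}, G₂.Adj ↑x ↑y ∧ e = s(Sum.inr x, Sum.inr y)} ∪
       {s(Sum.inl ⟨a₁, ha₁⟩, Sum.inr ⟨a₂, ha₂⟩),
        s(Sum.inl ⟨b₁, hb₁⟩, Sum.inr ⟨b₂, hb₂⟩),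
        s(Sum.inl ⟨c₁, hc₁⟩, Sum.inr ⟨c₂, hc₂⟩)})) := by
  classical
  set S₁ : Set (Sym2 ({x : V₁ // x ≠ v₁} ⊕ {x : V₂ // x ≠ v₂})) :=
    {e | ∃ x y : {x : V₁ // x ≠ v₁}, G₁.Adj ↑x ↑y ∧ e = s(Sum.inl x, Sum.inl y)} with hS₁def
  set S₂ : Set (Sym2 ({x : V₁ // x ≠ v₁} ⊕ {x : V₂ // x ≠ v₂})) :=
    {e | ∃ x y : {x : V₂ // x ≠ v₂}, G₂.Adj ↑x ↑y ∧ e = s(Sum.inr x, Sum.inr y)} with hS₂def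
  set T : Set (Sym2 ({x : V₁ // x ≠ v₁} ⊕ {x : V₂ // x ≠ v₂})) :=
    {s(Sum.inl ⟨a₁, ha₁⟩, Sum.inr ⟨a₂, ha₂⟩),
     s(Sum.inl ⟨b₁, hb₁⟩, Sum.inr ⟨b₂, hb₂⟩),
     s(Sum.inl ⟨c₁, hc₁⟩, Sum.inr ⟨c₂, hc₂⟩)} with hTdef
  -- the edge set of the 3-sum
  have hE : (SimpleGraph.fromEdgeSet (S₁ ∪ S₂ ∪ T)).edgeSet = S₁ ∪ S₂ ∪ T := by
    rw [SimpleGraph.edgeSet_fromEdgeSet, sdiff_eq_self_iff_disjoint]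
    rw [Set.disjoint_left]
    intro e hdiag hmem
    rcases hmem with (hm | hm) | hm
    · rw [hS₁def] at hm
      obtain ⟨x, y, hadj, rfl⟩ := hm
      simp only [Sym2.diagSet, Set.mem_setOf_eq, Sym2.mk_isDiag_iff] at hdiag
      exact hadj.ne (congrArg Subtype.val (Sum.inl_injective hdiag))
    · rw [hS₂def] at hm
      obtain ⟨x, y, hadj, rfl⟩ := hm
      simp only [Sym2.diagSet, Set.mem_setOf_eq, Sym2.mk_isDiag_iff] at hdiag
      exact hadj.ne (congrArg Subtype.val (Sum.inr_injective hdiag))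
    · rw [hTdef] at hm
      simp only [Set.mem_insert_iff, Set.mem_singleton_iff] at hm
      rcases hm with rfl | rfl | rfl <;> simp [Set.mem_setOf_eq, Sym2.mk_isDiag_iff] at hdiag
  -- disjointness
  have hd12 : Disjoint S₁ S₂ := by
    rw [Set.disjoint_left]
    rintro e he1 he2
    rw [hS₁def] at he1; rw [hS₂def] at he2
    obtain ⟨x, y, -, rfl⟩ := he1
    obtain ⟨u, w, -, heq⟩ := he2
    rw [Sym2.eq_iff] at heq
    rcases heq with ⟨h', -⟩ | ⟨h', -⟩ <;> exact nomatch h'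
  have hd1T : Disjoint S₁ T := by
    rw [Set.disjoint_left]
    rintro e he1 he2
    rw [hS₁def] at he1; rw [hTdef] at he2
    obtain ⟨x, y, -, rfl⟩ := he1
    simp only [Set.mem_insert_iff, Set.mem_singleton_iff] at he2
    rcases he2 with h' | h' | h' <;> rw [Sym2.eq_iff] at h' <;>
      rcases h' with ⟨-, h''⟩ | ⟨h'', -⟩ <;> exact nomatch h''
  have hd2T : Disjoint S₂ T := by
    rw [Set.disjoint_left]
    rintro e he1 he2
    rw [hS₂def] at he1; rw [hTdef] at he2
    obtain ⟨x, y, -, rfl⟩ := he1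
    simp only [Set.mem_insert_iff, Set.mem_singleton_iff] at he2
    rcases he2 with h' | h' | h' <;> rw [Sym2.eq_iff] at h' <;>
      rcases h' with ⟨h'', -⟩ | ⟨-, h''⟩ <;> exact nomatch h''
  -- cardinalities
  have hT3 : T.ncard = 3 := by
    rw [hTdef]
    refine aux_ncard_triple ?_ ?_ ?_ <;>
      · intro h'
        rw [Sym2.eq_iff] at h'
        simp_all
  have hc1 : S₁.ncard = {e ∈ G₁.edgeSet | v₁ ∉ e}.ncard := by
    rw [hS₁def,
      aux_ncard_pattern Sum.inl_injective
        (fun x y : {x : V₁ // x ≠ v₁} => G₁.Adj ↑x ↑y),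
      aux_off_vertex G₁ v₁,
      aux_ncard_pattern Subtype.val_injective
        (fun x y : {x : V₁ // x ≠ v₁} => G₁.Adj ↑x ↑y)]
  have hc2 : S₂.ncard = {e ∈ G₂.edgeSet | v₂ ∉ e}.ncard := by
    rw [hS₂def,
      aux_ncard_pattern Sum.inr_injective
        (fun x y : {x : V₂ // x ≠ v₂} => G₂.Adj ↑x ↑y),
      aux_off_vertex G₂ v₂,
      aux_ncard_pattern Subtype.val_injective
        (fun x y : {x : V₂ // x ≠ v₂} => G₂.Adj ↑x ↑y)]
  have hm₁ : G₁.edgeSet.ncard = S₁.ncard + 3 := by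
    rw [hc1]; exact aux_edge_split hN₁ hab₁ hac₁ hbc₁
  have hm₂ : G₂.edgeSet.ncard = S₂.ncard + 3 := by
    rw [hc2]; exact aux_edge_split hN₂ hab₂ hac₂ hbc₂
  have hUcard : (S₁ ∪ S₂ ∪ T).ncard = S₁.ncard + S₂.ncard + 3 := by
    rw [Set.ncard_union_eq (Set.disjoint_union_left.mpr ⟨hd1T, hd2T⟩)
        (Set.toFinite _) (Set.toFinite _),
      Set.ncard_union_eq hd12 (Set.toFinite _) (Set.toFinite _), hT3]
  have hcardW : Fintype.card ({x : V₁ // x ≠ v₁} ⊕ {x : V₂ // x ≠ v₂}) =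
      (Fintype.card V₁ - 1) + (Fintype.card V₂ - 1) := by
    rw [Fintype.card_sum]
    congr 1 <;> simp [Fintype.card_subtype_compl]
  have hpos₁ : 1 ≤ Fintype.card V₁ := Fintype.card_pos_iff.mpr ⟨v₁⟩
  have hpos₂ : 1 ≤ Fintype.card V₂ := Fintype.card_pos_iff.mpr ⟨v₂⟩
  constructor
  · -- edge count
    have e1 := h₁.1
    have e2 := h₂.1
    rw [hE, hUcard, hcardW]
    omega
  · -- sparsity
    intro X hX
    set Y₁ : Set V₁ :=
      Subtype.val '' {x : {x : V₁ // x ≠ v₁} | Sum.inl x ∈ X} with hY₁def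
    set Y₂ : Set V₂ :=
      Subtype.val '' {x : {x : V₂ // x ≠ v₂} | Sum.inr x ∈ X} with hY₂def
    have hv₁Y : v₁ ∉ Y₁ := by rintro ⟨x, -, hx⟩; exact x.2 hx
    have hv₂Y : v₂ ∉ Y₂ := by rintro ⟨x, -, hx⟩; exact x.2 hx
    have hk₁ : Y₁.ncard = X.toLeft.card := by
      rw [hY₁def, Set.ncard_image_of_injective _ Subtype.val_injective]
      have hs : {x : {x : V₁ // x ≠ v₁} | Sum.inl x ∈ X} = ↑X.toLeft := by
        ext x; simp [Finset.mem_toLeft]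
      rw [hs, Set.ncard_coe_finset]
    have hk₂ : Y₂.ncard = X.toRight.card := by
      rw [hY₂def, Set.ncard_image_of_injective _ Subtype.val_injective]
      have hs : {x : {x : V₂ // x ≠ v₂} | Sum.inr x ∈ X} = ↑X.toRight := by
        ext x; simp [Finset.mem_toRight]
      rw [hs, Set.ncard_coe_finset]
    have hcardX : X.card = Y₁.ncard + Y₂.ncard := by
      rw [hk₁, hk₂, Finset.card_toLeft_add_card_toRight]
    set P : Set (Sym2 ({x : V₁ // x ≠ v₁} ⊕ {x : V₂ // x ≠ v₂})) :=
      {e | ∀ u ∈ e, u ∈ (↑X : Set ({x : V₁ // x ≠ v₁} ⊕ {x : V₂ // x ≠ v₂}))} with hPdef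
    have hdecomp : indEdges (SimpleGraph.fromEdgeSet (S₁ ∪ S₂ ∪ T)) ↑X =
        (S₁ ∩ P).ncard + (S₂ ∩ P).ncard + (T ∩ P).ncard := by
      rw [indEdges]
      have hsep : {e ∈ (SimpleGraph.fromEdgeSet (S₁ ∪ S₂ ∪ T)).edgeSet |
          ∀ v ∈ e, v ∈ (↑X : Set ({x : V₁ // x ≠ v₁} ⊕ {x : V₂ // x ≠ v₂}))} =
          (S₁ ∩ P) ∪ (S₂ ∩ P) ∪ (T ∩ P) := by
        rw [hE]
        ext e
        constructor
        · rintro ⟨hm, hp⟩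
          rcases hm with (h' | h') | h'
          · exact Or.inl (Or.inl ⟨h', hp⟩)
          · exact Or.inl (Or.inr ⟨h', hp⟩)
          · exact Or.inr ⟨h', hp⟩
        · rintro ((⟨h', hp⟩ | ⟨h', hp⟩) | ⟨h', hp⟩)
          · exact ⟨Or.inl (Or.inl h'), hp⟩
          · exact ⟨Or.inl (Or.inr h'), hp⟩
          · exact ⟨Or.inr h', hp⟩
      rw [hsep,
        Set.ncard_union_eq
          ((Set.disjoint_union_left.mpr ⟨hd1T, hd2T⟩).mono
            (Set.union_subset_union Set.inter_subset_left Set.inter_subset_left)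
            Set.inter_subset_left)
          (Set.toFinite _) (Set.toFinite _),
        Set.ncard_union_eq
          (hd12.mono Set.inter_subset_left Set.inter_subset_left)
          (Set.toFinite _) (Set.toFinite _)]
    have hn₁ : (S₁ ∩ P).ncard = indEdges G₁ Y₁ := by
      have hset : S₁ ∩ P = {e | ∃ x y : {x : V₁ // x ≠ v₁},
          (G₁.Adj ↑x ↑y ∧ (Sum.inl x ∈ X) ∧ (Sum.inl y ∈ X)) ∧
          e = s(Sum.inl x, Sum.inl y)} := by
        ext e
        constructor
        · rintro ⟨he1, hp⟩
          rw [hS₁def] at he1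
          obtain ⟨x, y, hadj, rfl⟩ := he1
          exact ⟨x, y, ⟨hadj, hp _ (Sym2.mem_mk_left _ _), hp _ (Sym2.mem_mk_right _ _)⟩, rfl⟩
        · rintro ⟨x, y, ⟨hadj, hx, hy⟩, rfl⟩
          refine ⟨⟨x, y, hadj, rfl⟩, ?_⟩
          intro u hu
          rw [Sym2.mem_iff] at hu
          rcases hu with rfl | rfl
          · exact hx
          · exact hy
      rw [hset, hY₁def]
      exact aux_count_side G₁ v₁ _ Sum.inl_injective (fun x => Sum.inl x ∈ X)
    have hn₂ : (S₂ ∩ P).ncard = indEdges G₂ Y₂ := by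
      have hset : S₂ ∩ P = {e | ∃ x y : {x : V₂ // x ≠ v₂},
          (G₂.Adj ↑x ↑y ∧ (Sum.inr x ∈ X) ∧ (Sum.inr y ∈ X)) ∧
          e = s(Sum.inr x, Sum.inr y)} := by
        ext e
        constructor
        · rintro ⟨he1, hp⟩
          rw [hS₂def] at he1
          obtain ⟨x, y, hadj, rfl⟩ := he1
          exact ⟨x, y, ⟨hadj, hp _ (Sym2.mem_mk_left _ _), hp _ (Sym2.mem_mk_right _ _)⟩, rfl⟩
        · rintro ⟨x, y, ⟨hadj, hx, hy⟩, rfl⟩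
          refine ⟨⟨x, y, hadj, rfl⟩, ?_⟩
          intro u hu
          rw [Sym2.mem_iff] at hu
          rcases hu with rfl | rfl
          · exact hx
          · exact hy
      rw [hset, hY₂def]
      exact aux_count_side G₂ v₂ _ Sum.inr_injective (fun x => Sum.inr x ∈ X)
    have ht3 : (T ∩ P).ncard ≤ 3 := by
      rw [← hT3]
      exact Set.ncard_le_ncard Set.inter_subset_left (Set.toFinite _)
    have htpos : 0 < (T ∩ P).ncard → 1 ≤ Y₁.ncard ∧ 1 ≤ Y₂.ncard := by
      intro hpos
      obtain ⟨e, heT, heP⟩ := (Set.ncard_pos (Set.toFinite _)).mp hpos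
      rw [hTdef] at heT
      simp only [Set.mem_insert_iff, Set.mem_singleton_iff] at heT
      have key : ∀ (u₁ : V₁) (hu₁ : u₁ ≠ v₁) (u₂ : V₂) (hu₂ : u₂ ≠ v₂),
          e = s(Sum.inl ⟨u₁, hu₁⟩, Sum.inr ⟨u₂, hu₂⟩) →
          1 ≤ Y₁.ncard ∧ 1 ≤ Y₂.ncard := by
        rintro u₁ hu₁ u₂ hu₂ rfl
        have h1 : Sum.inl (⟨u₁, hu₁⟩ : {x : V₁ // x ≠ v₁}) ∈ X :=
          heP _ (Sym2.mem_mk_left _ _)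
        have h2 : Sum.inr (⟨u₂, hu₂⟩ : {x : V₂ // x ≠ v₂}) ∈ X :=
          heP _ (Sym2.mem_mk_right _ _)
        constructor
        · exact (Set.ncard_pos (Set.toFinite _)).mpr ⟨u₁, ⟨u₁, hu₁⟩, h1, rfl⟩
        · exact (Set.ncard_pos (Set.toFinite _)).mpr ⟨u₂, ⟨u₂, hu₂⟩, h2, rfl⟩
      rcases heT with rfl | rfl | rfl
      · exact key a₁ ha₁ a₂ ha₂ rfl
      · exact key b₁ hb₁ b₂ hb₂ rfl
      · exact key c₁ hc₁ c₂ hc₂ rfl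
    have F1 : indEdges G₁ Y₁ ≤ 2 * Y₁.ncard - 2 := aux_side h₁ hv₁Y
    have F2 : indEdges G₂ Y₂ ≤ 2 * Y₂.ncard - 2 := aux_side h₂ hv₂Y
    have F6 : (T ∩ P).ncard = 3 →
        (indEdges G₁ Y₁ + 3 ≤ 2 * (Y₁.ncard + 1) - 2) ∨
        (indEdges G₂ Y₂ + 3 ≤ 2 * (Y₂.ncard + 1) - 2) := by
      intro h3
      have hTP : T ∩ P = T :=
        Set.eq_of_subset_of_ncard_le Set.inter_subset_left
          (by rw [h3, hT3]) (Set.toFinite _)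
      have hTsubP : T ⊆ P := by
        intro e he
        rw [← hTP] at he
        exact he.2
      have hmem : ∀ (u₁ : V₁) (hu₁ : u₁ ≠ v₁) (u₂ : V₂) (hu₂ : u₂ ≠ v₂),
          s(Sum.inl ⟨u₁, hu₁⟩, (Sum.inr ⟨u₂, hu₂⟩ :
            ({x : V₁ // x ≠ v₁} ⊕ {x : V₂ // x ≠ v₂}))) ∈ T →
          u₁ ∈ Y₁ ∧ u₂ ∈ Y₂ := by
        intro u₁ hu₁ u₂ hu₂ hin
        have hp := hTsubP hin
        exact ⟨⟨⟨u₁, hu₁⟩, hp _ (Sym2.mem_mk_left _ _), rfl⟩,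
          ⟨⟨u₂, hu₂⟩, hp _ (Sym2.mem_mk_right _ _), rfl⟩⟩
      have hma := hmem a₁ ha₁ a₂ ha₂ (by rw [hTdef]; exact Set.mem_insert _ _)
      have hmb := hmem b₁ hb₁ b₂ hb₂
        (by rw [hTdef]; exact Set.mem_insert_of_mem _ (Set.mem_insert _ _))
      have hmc := hmem c₁ hc₁ c₂ hc₂
        (by rw [hTdef]; exact Set.mem_insert_of_mem _ (Set.mem_insert_of_mem _ rfl))
      obtain ⟨w, -, hw⟩ := Finset.exists_of_ssubset hX
      cases w with
      | inl w₁ =>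
        left
        refine aux_side_strong h₁ hv₁Y hN₁ hab₁ hac₁ hbc₁ hma.1 hmb.1 hmc.1
          (w := ↑w₁) ?_ w₁.2
        rintro ⟨x, hxm, hxe⟩
        have hxw : x = w₁ := Subtype.val_injective hxe
        rw [hxw] at hxm
        exact hw hxm
      | inr w₂ =>
        right
        refine aux_side_strong h₂ hv₂Y hN₂ hab₂ hac₂ hbc₂ hma.2 hmb.2 hmc.2
          (w := ↑w₂) ?_ w₂.2
        rintro ⟨x, hxm, hxe⟩
        have hxw : x = w₂ := Subtype.val_injective hxe
        rw [hxw] at hxm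
        exact hw hxm
    rw [hdecomp, hn₁, hn₂, hcardX]
    by_cases h3 : (T ∩ P).ncard = 3
    · rcases F6 h3 with h' | h'
      · have hp := htpos (by omega)
        omega
      · have hp := htpos (by omega)
        omega
    · by_cases h0 : (T ∩ P).ncard = 0
      · omega
      · have hp := htpos (by omega)
        omega
end

section
/- Let G=(V,E) be a circuit in the simple (2,2)-sparsity matroid with a non-trivial 3-edge cutset {a₁a₂, b₁b₂, c₁c₂} giving a bipartition A, B of V with a₁,b₁,c₁ ∈ A and a₂,b₂,c₂ ∈ B. Then the graphs obtained by the 3-separation, namely G[A] with a new vertex v₁ joined to a₁, b₁, c₁, and G[B] with a new vertex v₂ joined to a₂, b₂, c₂, are both circuits in the simple (2,2)-sparsity matroid. -/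
variable {V : Type*}

private lemma ncard_triple {α : Type*} {x y z : α} (h1 : x ≠ y) (h2 : x ≠ z) (h3 : y ≠ z) :
    ({x, y, z} : Set α).ncard = 3 := by
  rw [Set.ncard_insert_of_notMem (by simp [h1, h2])
    ((Set.finite_singleton _).insert _), Set.ncard_pair h3]

private lemma three_disjoint_le {α : Type*} [Finite α] {s t u E : Set α}
    (hs : s ⊆ E) (ht : t ⊆ E) (hu : u ⊆ E)
    (hst : Disjoint s t) (hsu : Disjoint s u) (htu : Disjoint t u) :
    s.ncard + t.ncard + u.ncard ≤ E.ncard := by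
  have h1 : (s ∪ t ∪ u).ncard = s.ncard + t.ncard + u.ncard := by
    rw [Set.ncard_union_eq (by simp [Set.disjoint_union_left, hsu, htu]) (Set.toFinite _)
      (Set.toFinite _), Set.ncard_union_eq hst (Set.toFinite _) (Set.toFinite _)]
  rw [← h1]
  exact Set.ncard_le_ncard (by simp [Set.union_subset, hs, ht, hu]) (Set.toFinite E)

private lemma three_disjoint_eq {α : Type*} [Finite α] {s t u E : Set α}
    (hE : E = s ∪ t ∪ u)
    (hst : Disjoint s t) (hsu : Disjoint s u) (htu : Disjoint t u) :
    E.ncard = s.ncard + t.ncard + u.ncard := by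
  subst hE
  rw [Set.ncard_union_eq (by simp [Set.disjoint_union_left, hsu, htu]) (Set.toFinite _)
    (Set.toFinite _), Set.ncard_union_eq hst (Set.toFinite _) (Set.toFinite _)]

theorem aux_circuit [Fintype V] [DecidableEq V]
    (G : SimpleGraph V) (hG : IsCircuit G)
    (P : V → Prop) [DecidablePred P]
    (a b c a' b' c' : V)
    (ha : P a) (hb : P b) (hc : P c)
    (ha' : ¬ P a') (hb' : ¬ P b') (hc' : ¬ P c')
    (hab : a ≠ b) (hac : a ≠ c) (hbc : b ≠ c)
    (hab' : a' ≠ b') (hac' : a' ≠ c') (hbc' : b' ≠ c')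
    (e₁ : G.Adj a a') (e₂ : G.Adj b b') (e₃ : G.Adj c c')
    (hS2 : 2 ≤ (Finset.univ.filter P).card)
    (hSc2 : 2 ≤ (Finset.univ.filter (fun v => ¬ P v)).card)
    (hcut : ∀ x y : V, P x → ¬ P y → G.Adj x y →
      s(x, y) ∈ ({s(a, a'), s(b, b'), s(c, c')} : Set (Sym2 V))) :
    IsCircuit (SimpleGraph.fromEdgeSet
      (({e | ∃ x y : {x : V // P x}, G.Adj ↑x ↑y ∧ e = s(some x, some y)} :
          Set (Sym2 (Option {x : V // P x}))) ∪
       {s(none, some ⟨a, ha⟩), s(none, some ⟨b, hb⟩), s(none, some ⟨c, hc⟩)})) := by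
  classical
  set sub := {x : V // P x} with hsub
  set Esome : Set (Sym2 (Option sub)) :=
    {e | ∃ x y : sub, G.Adj ↑x ↑y ∧ e = s(some x, some y)} with hEsomeDef
  set New : Set (Sym2 (Option sub)) :=
    {s(none, some ⟨a, ha⟩), s(none, some ⟨b, hb⟩), s(none, some ⟨c, hc⟩)} with hNewDef
  set Sf : Finset V := Finset.univ.filter P with hSfDef
  set Bc : Finset V := Finset.univ.filter (fun v => ¬ P v) with hBcDef
  have hPne : ∀ x y : V, P x → ¬ P y → x ≠ y := fun x y hx hy h => hy (h ▸ hx)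
  -- edge set of the new graph
  have hEdge : (SimpleGraph.fromEdgeSet (Esome ∪ New)).edgeSet = Esome ∪ New := by
    rw [SimpleGraph.edgeSet_fromEdgeSet]
    rw [sdiff_eq_self_iff_disjoint]
    rw [Set.disjoint_left]
    rintro e hd he
    rcases he with ⟨x, y, hxy, rfl⟩ | he
    · simp only [Sym2.diagSet, Set.mem_setOf_eq, Sym2.isDiag_iff_proj_eq] at hd
      exact G.ne_of_adj hxy (by simpa using congrArg (Option.map Subtype.val) hd)
    · rcases he with rfl | rfl | rfl <;> simp [Sym2.isDiag_iff_proj_eq] at hd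
  -- none is not in Esome edges, is in New edges
  have hNoneEsome : ∀ e ∈ Esome, (none : Option sub) ∉ e := by
    rintro e ⟨x, y, hxy, rfl⟩ h
    rcases Sym2.mem_iff.1 h with h | h <;> exact Option.some_ne_none _ h.symm
  have hNoneNew : ∀ e ∈ New, (none : Option sub) ∈ e := by
    rintro e (rfl | rfl | rfl) <;> simp
  have hdisjEN : Disjoint Esome New := by
    rw [Set.disjoint_left]
    exact fun e he hn => hNoneEsome e he (hNoneNew e hn)
  -- the X' construction
  have mem_X' : ∀ (X : Finset (Option sub)) (v : V),
      v ∈ (X.preimage some (Option.some_injective _).injOn).image Subtype.val ↔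
        ∃ h : P v, some (⟨v, h⟩ : sub) ∈ X := by
    intro X v
    simp only [Finset.mem_image, Finset.mem_preimage]
    constructor
    · rintro ⟨t, ht, rfl⟩; exact ⟨t.2, ht⟩
    · rintro ⟨hv, h⟩; exact ⟨⟨v, hv⟩, h, rfl⟩
  -- the induced edge sets transfer
  have claimA : ∀ X : Finset (Option sub),
      {e ∈ Esome | ∀ v ∈ e, v ∈ (X : Set (Option sub))} =
        Sym2.map (some : sub → Option sub) ''
          {e : Sym2 sub | Sym2.map Subtype.val e ∈ G.edgeSet ∧ ∀ t ∈ e, some t ∈ X} := by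
    intro X
    ext e
    constructor
    · rintro ⟨⟨x, y, hxy, rfl⟩, hmem⟩
      refine ⟨s(x, y), ⟨by simpa using hxy, ?_⟩, by simp⟩
      intro t ht
      rcases Sym2.mem_iff.1 ht with rfl | rfl
      · exact hmem _ (by simp)
      · exact hmem _ (by simp)
    · rintro ⟨e', ⟨hadj, hX⟩, rfl⟩
      induction e' using Sym2.ind with
      | _ x y =>
        refine ⟨⟨x, y, by simpa using hadj, by simp⟩, ?_⟩
        intro v hv
        rw [Sym2.map_pair_eq] at hv
        rcases Sym2.mem_iff.1 hv with rfl | rfl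
        · exact hX x (by simp)
        · exact hX y (by simp)
  have claimB : ∀ X : Finset (Option sub),
      {e ∈ G.edgeSet | ∀ v ∈ e,
          v ∈ (((X.preimage some (Option.some_injective _).injOn).image Subtype.val : Finset V) :
            Set V)} =
        Sym2.map (Subtype.val : sub → V) ''
          {e : Sym2 sub | Sym2.map Subtype.val e ∈ G.edgeSet ∧ ∀ t ∈ e, some t ∈ X} := by
    intro X
    ext e
    induction e using Sym2.ind with
    | _ x y =>
      constructor
      · rintro ⟨he, hmem⟩
        obtain ⟨hPx, hsx⟩ := (mem_X' X x).1 (by simpa using hmem x (by simp))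
        obtain ⟨hPy, hsy⟩ := (mem_X' X y).1 (by simpa using hmem y (by simp))
        refine ⟨s(⟨x, hPx⟩, ⟨y, hPy⟩), ⟨by simpa using he, ?_⟩, by simp⟩
        intro t ht
        rcases Sym2.mem_iff.1 ht with rfl | rfl
        · exact hsx
        · exact hsy
      · rintro ⟨e', ⟨hadj, hX⟩, he⟩
        induction e' using Sym2.ind with
        | _ t u =>
          rw [Sym2.map_pair_eq] at he
          refine ⟨he ▸ hadj, ?_⟩
          intro v hv
          rw [← he] at hv
          rcases Sym2.mem_iff.1 hv with rfl | rfl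
          · exact Finset.mem_coe.2 ((mem_X' X _).2 ⟨t.2, hX t (by simp)⟩)
          · exact Finset.mem_coe.2 ((mem_X' X _).2 ⟨u.2, hX u (by simp)⟩)
  have hmapinj : Function.Injective (Sym2.map (Subtype.val : sub → V)) :=
    Sym2.map.injective Subtype.val_injective
  have hmapinj2 : Function.Injective (Sym2.map (some : sub → Option sub)) :=
    Sym2.map.injective (Option.some_injective _)
  -- the key counting identity for induced subgraph edges
  have part1 : ∀ X : Finset (Option sub),
      {e ∈ Esome | ∀ v ∈ e, v ∈ (X : Set (Option sub))}.ncard =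
        indEdges G ((X.preimage some (Option.some_injective _).injOn).image Subtype.val) := by
    intro X
    rw [claimA X, Set.ncard_image_of_injective _ hmapinj2]
    show _ = {e ∈ G.edgeSet | ∀ v ∈ e, v ∈ _}.ncard
    rw [claimB X, Set.ncard_image_of_injective _ hmapinj]
  -- cardinalities of X'
  have himg : ∀ X : Finset (Option sub),
      (X.preimage some (Option.some_injective _).injOn).image some = X.erase none := by
    intro X
    ext w
    cases w <;> simp
  have cardXp : ∀ X : Finset (Option sub),
      ((X.preimage some (Option.some_injective _).injOn).image Subtype.val).card =
        (X.erase none).card := by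
    intro X
    rw [Finset.card_image_of_injective _ Subtype.val_injective, ← himg X,
      Finset.card_image_of_injective _ (Option.some_injective _)]
  have card_mem : ∀ X : Finset (Option sub), none ∈ X →
      ((X.preimage some (Option.some_injective _).injOn).image Subtype.val).card + 1 =
        X.card := by
    intro X hX
    rw [cardXp X, Finset.card_erase_of_mem hX]
    have := Finset.card_pos.2 ⟨none, hX⟩
    omega
  have card_not_mem : ∀ X : Finset (Option sub), none ∉ X →
      ((X.preimage some (Option.some_injective _).injOn).image Subtype.val).card = X.card := by
    intro X hX
    rw [cardXp X, Finset.erase_eq_of_notMem hX]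
  -- a' is never in X'
  have not_mem_a' : ∀ X : Finset (Option sub),
      a' ∉ (X.preimage some (Option.some_injective _).injOn).image Subtype.val := by
    intro X h
    obtain ⟨h', -⟩ := (mem_X' X a').1 h
    exact ha' h'
  -- counting the new edges inside X
  have claimC0 : ∀ X : Finset (Option sub), none ∉ X →
      {e ∈ New | ∀ v ∈ e, v ∈ (X : Set (Option sub))} = ∅ := by
    intro X hX
    ext e
    simp only [Set.mem_sep_iff, Set.mem_empty_iff_false, iff_false, not_and]
    intro he hmem
    exact hX (hmem none (hNoneNew e he))
  have claimC1 : ∀ X : Finset (Option sub), none ∈ X →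
      {e ∈ New | ∀ v ∈ e, v ∈ (X : Set (Option sub))} =
        (fun t : sub => s((none : Option sub), some t)) ''
          (Subtype.val ⁻¹' (({a, b, c} : Set V) ∩
            ((X.preimage some (Option.some_injective _).injOn).image Subtype.val : Finset V))) := by
    intro X hX
    ext e
    constructor
    · rintro ⟨he, hmem⟩
      rcases he with rfl | rfl | rfl
      · exact ⟨⟨a, ha⟩, ⟨by simp, Finset.mem_coe.2 ((mem_X' X a).2 ⟨ha, hmem _ (by simp)⟩)⟩, rfl⟩
      · exact ⟨⟨b, hb⟩, ⟨by simp, Finset.mem_coe.2 ((mem_X' X b).2 ⟨hb, hmem _ (by simp)⟩)⟩, rfl⟩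
      · exact ⟨⟨c, hc⟩, ⟨by simp, Finset.mem_coe.2 ((mem_X' X c).2 ⟨hc, hmem _ (by simp)⟩)⟩, rfl⟩
    · rintro ⟨t, ⟨htabc, htX⟩, rfl⟩
      obtain ⟨h', hsome⟩ := (mem_X' X t).1 htX
      have hsome' : some t ∈ X := by
        have : (⟨(t : V), h'⟩ : sub) = t := Subtype.ext rfl
        rwa [this] at hsome
      constructor
      · simp only [Set.mem_insert_iff, Set.mem_singleton_iff] at htabc
        rcases htabc with h | h | h
        · rw [show t = (⟨a, ha⟩ : sub) from Subtype.ext h]; exact Set.mem_insert _ _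
        · rw [show t = (⟨b, hb⟩ : sub) from Subtype.ext h]
          exact Set.mem_insert_of_mem _ (Set.mem_insert _ _)
        · rw [show t = (⟨c, hc⟩ : sub) from Subtype.ext h]
          exact Set.mem_insert_of_mem _ (Set.mem_insert_of_mem _ rfl)
      · intro v hv
        rcases Sym2.mem_iff.1 hv with rfl | rfl
        · exact hX
        · exact hsome'
  have hinjnone : Function.Injective (fun t : sub => s((none : Option sub), some t)) := by
    intro t1 t2 h
    simp only [Sym2.eq_iff] at h
    rcases h with ⟨-, h⟩ | ⟨h, -⟩
    · exact Option.some_injective _ h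
    · exact (Option.some_ne_none _ h.symm).elim
  have claimC2 : ∀ X : Finset (Option sub), none ∈ X →
      {e ∈ New | ∀ v ∈ e, v ∈ (X : Set (Option sub))}.ncard =
        (({a, b, c} : Set V) ∩
          ((X.preimage some (Option.some_injective _).injOn).image Subtype.val : Finset V)).ncard := by
    intro X hX
    rw [claimC1 X hX, Set.ncard_image_of_injective _ hinjnone]
    rw [← Set.ncard_image_of_injective _ Subtype.val_injective]
    congr 1
    rw [Set.image_preimage_eq_inter_range]
    refine Set.inter_eq_self_of_subset_left ?_
    rintro v ⟨hv, -⟩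
    simp only [Set.mem_insert_iff, Set.mem_singleton_iff] at hv
    rcases hv with rfl | rfl | rfl
    · exact ⟨⟨_, ha⟩, rfl⟩
    · exact ⟨⟨_, hb⟩, rfl⟩
    · exact ⟨⟨_, hc⟩, rfl⟩
  -- the three cut edges are distinct
  have d1 : s(a, a') ≠ s(b, b') := by
    simp only [Ne, Sym2.eq_iff]
    rintro (⟨h1, -⟩ | ⟨h1, -⟩)
    · exact hab h1
    · exact hb' (h1 ▸ ha)
  have d2 : s(a, a') ≠ s(c, c') := by
    simp only [Ne, Sym2.eq_iff]
    rintro (⟨h1, -⟩ | ⟨h1, -⟩)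
    · exact hac h1
    · exact hc' (h1 ▸ ha)
  have d3 : s(b, b') ≠ s(c, c') := by
    simp only [Ne, Sym2.eq_iff]
    rintro (⟨h1, -⟩ | ⟨h1, -⟩)
    · exact hbc h1
    · exact hc' (h1 ▸ hb)
  have hCcard : ({s(a, a'), s(b, b'), s(c, c')} : Set (Sym2 V)).ncard = 3 :=
    ncard_triple d1 d2 d3
  -- global partition of the edge set of G
  have hpart : G.edgeSet =
      {e ∈ G.edgeSet | ∀ v ∈ e, v ∈ (Sf : Set V)} ∪
      {e ∈ G.edgeSet | ∀ v ∈ e, v ∈ (Bc : Set V)} ∪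
      ({s(a, a'), s(b, b'), s(c, c')} : Set (Sym2 V)) := by
    apply Set.Subset.antisymm
    · intro e he
      induction e using Sym2.ind with
      | _ x y =>
        by_cases hx : P x <;> by_cases hy : P y
        · left; left
          refine ⟨he, ?_⟩
          intro v hv
          rcases Sym2.mem_iff.1 hv with rfl | rfl <;> simp [hSfDef, hx, hy]
        · right; exact hcut x y hx hy ((G.mem_edgeSet).1 he)
        · right
          exact Set.mem_of_eq_of_mem Sym2.eq_swap
            (hcut y x hy hx ((G.mem_edgeSet).1 he).symm)
        · left; right
          refine ⟨he, ?_⟩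
          intro v hv
          rcases Sym2.mem_iff.1 hv with rfl | rfl <;> simp [hBcDef, hx, hy]
    · rintro e ((⟨he, -⟩ | ⟨he, -⟩) | he)
      · exact he
      · exact he
      · rcases he with rfl | rfl | rfl
        · exact (G.mem_edgeSet).2 e₁
        · exact (G.mem_edgeSet).2 e₂
        · exact (G.mem_edgeSet).2 e₃
  have djSB : Disjoint {e ∈ G.edgeSet | ∀ v ∈ e, v ∈ (Sf : Set V)}
      {e ∈ G.edgeSet | ∀ v ∈ e, v ∈ (Bc : Set V)} := by
    rw [Set.disjoint_left]
    rintro e ⟨he, h1⟩ ⟨-, h2⟩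
    have hx := h1 _ (Sym2.out_fst_mem e)
    have hy := h2 _ (Sym2.out_fst_mem e)
    rw [Finset.mem_coe, hSfDef, Finset.mem_filter] at hx
    rw [Finset.mem_coe, hBcDef, Finset.mem_filter] at hy
    exact hy.2 hx.2
  have djSC : Disjoint {e ∈ G.edgeSet | ∀ v ∈ e, v ∈ (Sf : Set V)}
      ({s(a, a'), s(b, b'), s(c, c')} : Set (Sym2 V)) := by
    rw [Set.disjoint_left]
    rintro e ⟨-, h1⟩ (rfl | rfl | rfl)
    · have := h1 a' (by simp)
      rw [Finset.mem_coe, hSfDef, Finset.mem_filter] at this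
      exact ha' this.2
    · have := h1 b' (by simp)
      rw [Finset.mem_coe, hSfDef, Finset.mem_filter] at this
      exact hb' this.2
    · have := h1 c' (by simp)
      rw [Finset.mem_coe, hSfDef, Finset.mem_filter] at this
      exact hc' this.2
  have djBC : Disjoint {e ∈ G.edgeSet | ∀ v ∈ e, v ∈ (Bc : Set V)}
      ({s(a, a'), s(b, b'), s(c, c')} : Set (Sym2 V)) := by
    rw [Set.disjoint_left]
    rintro e ⟨-, h1⟩ (rfl | rfl | rfl)
    · have := h1 a (by simp)
      rw [Finset.mem_coe, hBcDef, Finset.mem_filter] at this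
      exact this.2 ha
    · have := h1 b (by simp)
      rw [Finset.mem_coe, hBcDef, Finset.mem_filter] at this
      exact this.2 hb
    · have := h1 c (by simp)
      rw [Finset.mem_coe, hBcDef, Finset.mem_filter] at this
      exact this.2 hc
  have hEcount : G.edgeSet.ncard =
      indEdges G (Sf : Set V) + indEdges G (Bc : Set V) + 3 := by
    rw [three_disjoint_eq hpart djSB djSC djBC, hCcard]
    rfl
  have hSfproper : Sf ⊂ Finset.univ := by
    rw [Finset.ssubset_univ_iff]
    intro h
    have : a' ∈ Sf := by rw [h]; exact Finset.mem_univ a'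
    rw [hSfDef, Finset.mem_filter] at this
    exact ha' this.2
  have hBcproper : Bc ⊂ Finset.univ := by
    rw [Finset.ssubset_univ_iff]
    intro h
    have : a ∈ Bc := by rw [h]; exact Finset.mem_univ a
    rw [hBcDef, Finset.mem_filter] at this
    exact this.2 ha
  have hSf2 := hG.2 Sf hSfproper
  have hBc2 := hG.2 Bc hBcproper
  have hsum : Sf.card + Bc.card = Fintype.card V := by
    rw [hSfDef, hBcDef, Finset.card_filter_add_card_filter_not, Finset.card_univ]
  have hGr := hG.1
  have keyS : (indEdges G (Sf : Set V) : ℤ) = 2 * (Sf.card : ℤ) - 2 := by omega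
  have keyB : (indEdges G (Bc : Set V) : ℤ) = 2 * (Bc.card : ℤ) - 2 := by omega
  constructor
  · -- edge count of the new graph
    have hNewcard : New.ncard = 3 := by
      rw [hNewDef]
      have mkne : ∀ (x y : V) (hx : P x) (hy : P y), x ≠ y →
          s((none : Option sub), some ⟨x, hx⟩) ≠ s((none : Option sub), some ⟨y, hy⟩) := by
        intro x y hx hy hxy h
        rcases Sym2.eq_iff.1 h with ⟨-, h2⟩ | ⟨h2, -⟩
        · exact hxy (congrArg Subtype.val (Option.some_injective _ h2))
        · exact Option.some_ne_none _ h2.symm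
      exact ncard_triple (mkne a b ha hb hab) (mkne a c ha hc hac) (mkne b c hb hc hbc)
    have h2univ : ((Finset.univ : Finset (Option sub)).preimage some
        (Option.some_injective _).injOn).image Subtype.val = Sf := by
      ext v
      rw [mem_X' Finset.univ v, hSfDef, Finset.mem_filter]
      constructor
      · rintro ⟨h, -⟩; exact ⟨Finset.mem_univ v, h⟩
      · rintro ⟨-, h⟩; exact ⟨h, Finset.mem_univ _⟩
    have hEsomecard : Esome.ncard = indEdges G (Sf : Set V) := by
      have h1 : Esome = {e ∈ Esome | ∀ v ∈ e,
          v ∈ ((Finset.univ : Finset (Option sub)) : Set (Option sub))} := by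
        ext e; simp
      conv_lhs => rw [h1]
      rw [part1 Finset.univ, h2univ]
    have hcardU : (Esome ∪ New).ncard = indEdges G (Sf : Set V) + 3 := by
      rw [Set.ncard_union_eq hdisjEN (Set.toFinite _) (Set.toFinite _), hEsomecard, hNewcard]
    have hcardW : Fintype.card (Option sub) = Sf.card + 1 := by
      rw [Fintype.card_option]
      congr 1
      rw [hSfDef, Fintype.card_subtype]
    rw [hEdge, hcardU, hcardW]
    omega
  · -- sparsity condition
    intro X hX
    have hsplit : indEdges (SimpleGraph.fromEdgeSet (Esome ∪ New)) ↑X =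
        {e ∈ Esome | ∀ v ∈ e, v ∈ (X : Set (Option sub))}.ncard +
        {e ∈ New | ∀ v ∈ e, v ∈ (X : Set (Option sub))}.ncard := by
      show {e ∈ (SimpleGraph.fromEdgeSet (Esome ∪ New)).edgeSet |
        ∀ v ∈ e, v ∈ (X : Set (Option sub))}.ncard = _
      rw [hEdge]
      have hsep : {e ∈ Esome ∪ New | ∀ v ∈ e, v ∈ (X : Set (Option sub))} =
          {e ∈ Esome | ∀ v ∈ e, v ∈ (X : Set (Option sub))} ∪
          {e ∈ New | ∀ v ∈ e, v ∈ (X : Set (Option sub))} := by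
        ext e
        constructor
        · rintro ⟨he | he, hm⟩
          · exact Or.inl ⟨he, hm⟩
          · exact Or.inr ⟨he, hm⟩
        · rintro (⟨he, hm⟩ | ⟨he, hm⟩)
          · exact ⟨Or.inl he, hm⟩
          · exact ⟨Or.inr he, hm⟩
      rw [hsep, Set.ncard_union_eq (Set.disjoint_of_subset (Set.sep_subset _ _)
        (Set.sep_subset _ _) hdisjEN) (Set.toFinite _) (Set.toFinite _)]
    by_cases hnone : none ∈ X
    · -- the new vertex is in X
      rw [hsplit, part1 X, claimC2 X hnone]
      have hXvproper : ((X.preimage some (Option.some_injective _).injOn).image Subtype.val) ⊂ Finset.univ := by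
        rw [Finset.ssubset_univ_iff]
        intro h
        apply not_mem_a' X
        rw [h]
        exact Finset.mem_univ a'
      have hcard := card_mem X hnone
      have hm3 : (({a, b, c} : Set V) ∩ (((X.preimage some (Option.some_injective _).injOn).image Subtype.val) : Set V)).ncard ≤ 3 := by
        calc (({a, b, c} : Set V) ∩ (((X.preimage some (Option.some_injective _).injOn).image Subtype.val) : Set V)).ncard
            ≤ ({a, b, c} : Set V).ncard :=
              Set.ncard_le_ncard Set.inter_subset_left (Set.toFinite _)
          _ = 3 := ncard_triple hab hac hbc
      have hmle : (({a, b, c} : Set V) ∩ (((X.preimage some (Option.some_injective _).injOn).image Subtype.val) : Set V)).ncard ≤ ((X.preimage some (Option.some_injective _).injOn).image Subtype.val).card := by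
        rw [← Set.ncard_coe_finset ((X.preimage some (Option.some_injective _).injOn).image Subtype.val)]
        exact Set.ncard_le_ncard Set.inter_subset_right (Set.toFinite _)
      by_cases habc : ({a, b, c} : Set V) ⊆ (((X.preimage some (Option.some_injective _).injOn).image Subtype.val) : Set V)
      · -- all three attachment vertices in X
        have maX : a ∈ ((X.preimage some (Option.some_injective _).injOn).image Subtype.val) := habc (by simp)
        have mbX : b ∈ ((X.preimage some (Option.some_injective _).injOn).image Subtype.val) := habc (by simp)
        have mcX : c ∈ ((X.preimage some (Option.some_injective _).injOn).image Subtype.val) := habc (by simp)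
        have hdjXB : Disjoint ((X.preimage some (Option.some_injective _).injOn).image Subtype.val) Bc := by
          rw [Finset.disjoint_left]
          intro v hv hvB
          obtain ⟨hp, -⟩ := (mem_X' X v).1 hv
          rw [hBcDef, Finset.mem_filter] at hvB
          exact hvB.2 hp
        have hYproper : ((X.preimage some (Option.some_injective _).injOn).image Subtype.val) ∪ Bc ⊂ Finset.univ := by
          rw [Finset.ssubset_univ_iff]
          intro h
          obtain ⟨w, -, hw⟩ := Finset.exists_of_ssubset hX
          match w with
          | none => exact hw hnone
          | some t =>
            have hty : (t : V) ∈ ((X.preimage some (Option.some_injective _).injOn).image Subtype.val) ∪ Bc := by rw [h]; exact Finset.mem_univ _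
            rcases Finset.mem_union.1 hty with h1 | h1
            · obtain ⟨h', hsome⟩ := (mem_X' X _).1 h1
              have heq : some (⟨(t : V), h'⟩ : sub) = some t := by
                congr 1
              rw [heq] at hsome
              exact hw hsome
            · rw [hBcDef, Finset.mem_filter] at h1
              exact h1.2 t.2
        have hYcard : (((X.preimage some (Option.some_injective _).injOn).image Subtype.val) ∪ Bc).card = ((X.preimage some (Option.some_injective _).injOn).image Subtype.val).card + Bc.card :=
          Finset.card_union_of_disjoint hdjXB
        have hbig : indEdges G (((X.preimage some (Option.some_injective _).injOn).image Subtype.val) : Set V) + indEdges G (Bc : Set V) + 3 ≤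
            indEdges G ((((X.preimage some (Option.some_injective _).injOn).image Subtype.val) ∪ Bc : Finset V) : Set V) := by
          show {e ∈ G.edgeSet | ∀ v ∈ e, v ∈ (((X.preimage some (Option.some_injective _).injOn).image Subtype.val) : Set V)}.ncard +
            {e ∈ G.edgeSet | ∀ v ∈ e, v ∈ (Bc : Set V)}.ncard + 3 ≤
            {e ∈ G.edgeSet | ∀ v ∈ e, v ∈ ((((X.preimage some (Option.some_injective _).injOn).image Subtype.val) ∪ Bc : Finset V) : Set V)}.ncard
          rw [← hCcard]
          apply three_disjoint_le
          · rintro e ⟨he, hm⟩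
            exact ⟨he, fun v hv => Finset.mem_coe.2 (Finset.mem_union_left _ (hm v hv))⟩
          · rintro e ⟨he, hm⟩
            exact ⟨he, fun v hv => Finset.mem_coe.2 (Finset.mem_union_right _ (hm v hv))⟩
          · have hBmem : ∀ v : V, ¬ P v → v ∈ ((X.preimage some (Option.some_injective _).injOn).image Subtype.val) ∪ Bc := by
              intro v hv
              refine Finset.mem_union_right _ ?_
              rw [hBcDef, Finset.mem_filter]
              exact ⟨Finset.mem_univ _, hv⟩
            rintro e (rfl | rfl | rfl)
            · refine ⟨(G.mem_edgeSet).2 e₁, ?_⟩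
              intro v hv
              rcases Sym2.mem_iff.1 hv with rfl | rfl
              · exact Finset.mem_coe.2 (Finset.mem_union_left _ maX)
              · exact Finset.mem_coe.2 (hBmem _ ha')
            · refine ⟨(G.mem_edgeSet).2 e₂, ?_⟩
              intro v hv
              rcases Sym2.mem_iff.1 hv with rfl | rfl
              · exact Finset.mem_coe.2 (Finset.mem_union_left _ mbX)
              · exact Finset.mem_coe.2 (hBmem _ hb')
            · refine ⟨(G.mem_edgeSet).2 e₃, ?_⟩
              intro v hv
              rcases Sym2.mem_iff.1 hv with rfl | rfl
              · exact Finset.mem_coe.2 (Finset.mem_union_left _ mcX)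
              · exact Finset.mem_coe.2 (hBmem _ hc')
          · rw [Set.disjoint_left]
            rintro e ⟨-, h1⟩ ⟨-, h2⟩
            have hu := h1 _ (Sym2.out_fst_mem e)
            have hv := h2 _ (Sym2.out_fst_mem e)
            obtain ⟨hp, -⟩ := (mem_X' X _).1 (Finset.mem_coe.1 hu)
            rw [Finset.mem_coe, hBcDef, Finset.mem_filter] at hv
            exact hv.2 hp
          · rw [Set.disjoint_left]
            rintro e ⟨-, h1⟩ (rfl | rfl | rfl)
            · exact ha' ((mem_X' X a').1 (Finset.mem_coe.1 (h1 a' (by simp)))).1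
            · exact hb' ((mem_X' X b').1 (Finset.mem_coe.1 (h1 b' (by simp)))).1
            · exact hc' ((mem_X' X c').1 (Finset.mem_coe.1 (h1 c' (by simp)))).1
          · rw [Set.disjoint_left]
            rintro e ⟨-, h1⟩ (rfl | rfl | rfl)
            · have := h1 a (by simp)
              rw [Finset.mem_coe, hBcDef, Finset.mem_filter] at this
              exact this.2 ha
            · have := h1 b (by simp)
              rw [Finset.mem_coe, hBcDef, Finset.mem_filter] at this
              exact this.2 hb
            · have := h1 c (by simp)
              rw [Finset.mem_coe, hBcDef, Finset.mem_filter] at this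
              exact this.2 hc
        have hYle := hG.2 _ hYproper
        omega
      · -- at most two attachment vertices in X
        have hm2 : (({a, b, c} : Set V) ∩ (((X.preimage some (Option.some_injective _).injOn).image Subtype.val) : Set V)).ncard ≤ 2 := by
          by_contra hcon
          push_neg at hcon
          have h3 : (({a, b, c} : Set V) ∩ (((X.preimage some (Option.some_injective _).injOn).image Subtype.val) : Set V)) = {a, b, c} := by
            apply Set.eq_of_subset_of_ncard_le Set.inter_subset_left ?_ (Set.toFinite _)
            rw [ncard_triple hab hac hbc]
            omega
          apply habc
          intro v hv
          rw [← h3] at hv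
          exact hv.2
        have hle := hG.2 _ hXvproper
        omega
    · -- the new vertex is not in X
      rw [hsplit, claimC0 X hnone, Set.ncard_empty, part1 X]
      have hp : ((X.preimage some (Option.some_injective _).injOn).image Subtype.val) ⊂ Finset.univ := by
        rw [Finset.ssubset_univ_iff]
        intro h
        apply not_mem_a' X
        rw [h]
        exact Finset.mem_univ a'
      have hle := hG.2 _ hp
      have hc := card_not_mem X hnone
      omega

private lemma isCircuit_congr {V : Type*} (i1 i2 : Fintype V) (G : SimpleGraph V) :
    @IsCircuit V i1 G ↔ @IsCircuit V i2 G := by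
  cases Subsingleton.elim i1 i2
  rfl


set_option maxHeartbeats 2000000

/-- The 3-separation: if `{a₁a₂, b₁b₂, c₁c₂}` is a non-trivial 3-edge cutset with
bipartition `A`, `V∖A`, then `G[A]` with a new vertex (`none`) joined to `a₁, b₁, c₁`
and `G[V∖A]` with a new vertex joined to `a₂, b₂, c₂` are both circuits. -/
theorem three_separation_circuits [Fintype V] [DecidableEq V]
    (G : SimpleGraph V) (hG : IsCircuit G)
    (A : Finset V) (a₁ b₁ c₁ a₂ b₂ c₂ : V)
    (hA2 : 2 ≤ A.card) (hB2 : 2 ≤ (Finset.univ \ A).card)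
    (ma₁ : a₁ ∈ A) (mb₁ : b₁ ∈ A) (mc₁ : c₁ ∈ A)
    (ma₂ : a₂ ∉ A) (mb₂ : b₂ ∉ A) (mc₂ : c₂ ∉ A)
    (hab₁ : a₁ ≠ b₁) (hac₁ : a₁ ≠ c₁) (hbc₁ : b₁ ≠ c₁)
    (hab₂ : a₂ ≠ b₂) (hac₂ : a₂ ≠ c₂) (hbc₂ : b₂ ≠ c₂)
    (e₁ : G.Adj a₁ a₂) (e₂ : G.Adj b₁ b₂) (e₃ : G.Adj c₁ c₂)
    (hcut : ∀ x y : V, x ∈ A → y ∉ A → G.Adj x y →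
      s(x, y) ∈ ({s(a₁, a₂), s(b₁, b₂), s(c₁, c₂)} : Set (Sym2 V))) :
    IsCircuit (SimpleGraph.fromEdgeSet
      (({e | ∃ x y : {x : V // x ∈ A}, G.Adj ↑x ↑y ∧ e = s(some x, some y)} :
          Set (Sym2 (Option {x : V // x ∈ A}))) ∪
       {s(none, some ⟨a₁, ma₁⟩), s(none, some ⟨b₁, mb₁⟩), s(none, some ⟨c₁, mc₁⟩)})) ∧
    IsCircuit (SimpleGraph.fromEdgeSet
      (({e | ∃ x y : {x : V // x ∉ A}, G.Adj ↑x ↑y ∧ e = s(some x, some y)} :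
          Set (Sym2 (Option {x : V // x ∉ A}))) ∪
       {s(none, some ⟨a₂, ma₂⟩), s(none, some ⟨b₂, mb₂⟩), s(none, some ⟨c₂, mc₂⟩)})) := by
  have hfA : Finset.univ.filter (fun x => x ∈ A) = A := by
    ext v; simp
  have hfB : Finset.univ.filter (fun x => x ∉ A) = Finset.univ \ A := by
    ext v; simp
  constructor
  · exact (isCircuit_congr _ _ _).2 <| aux_circuit G hG (fun x => x ∈ A) a₁ b₁ c₁ a₂ b₂ c₂ ma₁ mb₁ mc₁ ma₂ mb₂ mc₂
      hab₁ hac₁ hbc₁ hab₂ hac₂ hbc₂ e₁ e₂ e₃ (by rw [hfA]; exact hA2)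
      (by rw [show (Finset.univ.filter fun v => ¬ v ∈ A) = Finset.univ \ A from hfB]; exact hB2)
      hcut
  · refine (isCircuit_congr _ _ _).2 <| aux_circuit G hG (fun x => x ∉ A) a₂ b₂ c₂ a₁ b₁ c₁ ma₂ mb₂ mc₂
      (not_not_intro ma₁) (not_not_intro mb₁) (not_not_intro mc₁)
      hab₂ hac₂ hbc₂ hab₁ hac₁ hbc₁ e₁.symm e₂.symm e₃.symm (by rw [hfB]; exact hB2)
      (by rw [show (Finset.univ.filter fun v => ¬ v ∉ A) = A from by ext v; simp]; exact hA2)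
      ?_
    intro x y hx hy hxy
    rw [not_not] at hy
    have := hcut y x hy hx hxy.symm
    rcases this with h | h | h
    · exact Set.mem_insert_iff.2 (Or.inl ((Sym2.eq_swap.trans h).trans Sym2.eq_swap))
    · exact Set.mem_insert_iff.2 (Or.inr (Set.mem_insert_iff.2
        (Or.inl ((Sym2.eq_swap.trans h).trans Sym2.eq_swap))))
    · exact Set.mem_insert_iff.2 (Or.inr (Set.mem_insert_iff.2 (Or.inr
        (Set.mem_singleton_iff.2 ((Sym2.eq_swap.trans h).trans Sym2.eq_swap)))))
end

section
/- Let G=(V,E) be a circuit in the simple (2,2)-sparsity matroid with a cut pair {a,b} with ab ∈ E and a bipartition A, B of V∖{a,b} with no edges between A and B, such that f(G[A∪{a,b}]) = f(G[B∪{a,b}]) = 2. Then the graphs obtained by 2-separation, namely G[A∪{a,b}] together with two new vertices c,d and all edges of K4 on {a,b,c,d} (keeping a single copy of ab), and similarly for B, are both circuits in the simple (2,2)-sparsity matroid. -/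
variable {V : Type*}

lemma ncard_lift (G : SimpleGraph V) (S : Finset V)
    (Q : ({x : V // x ∈ S} ⊕ Fin 2) → Prop) :
    {e : Sym2 ({x : V // x ∈ S} ⊕ Fin 2) |
       (∃ x y : {x : V // x ∈ S}, G.Adj ↑x ↑y ∧ e = s(Sum.inl x, Sum.inl y)) ∧
       ∀ v ∈ e, Q v}.ncard
    = {e ∈ G.edgeSet | ∀ v ∈ e, ∃ h : v ∈ S, Q (Sum.inl ⟨v, h⟩)}.ncard := by
  classical
  set D : Set (Sym2 {x : V // x ∈ S}) :=
    {e | Sym2.map Subtype.val e ∈ G.edgeSet ∧ ∀ x ∈ e, Q (Sum.inl x)} with hD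
  have h1 : {e : Sym2 ({x : V // x ∈ S} ⊕ Fin 2) |
       (∃ x y : {x : V // x ∈ S}, G.Adj ↑x ↑y ∧ e = s(Sum.inl x, Sum.inl y)) ∧
       ∀ v ∈ e, Q v} = Sym2.map Sum.inl '' D := by
    ext e
    constructor
    · rintro ⟨⟨x, y, hxy, rfl⟩, hQ⟩
      refine ⟨s(x, y), ⟨by simpa using hxy, ?_⟩, rfl⟩
      intro z hz
      rcases Sym2.mem_iff.mp hz with rfl | rfl
      · exact hQ _ (by simp)
      · exact hQ _ (by simp)
    · rintro ⟨d, hd, rfl⟩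
      induction d using Sym2.ind with
      | _ x y =>
        obtain ⟨hd1, hd2⟩ := hd
        refine ⟨⟨x, y, by simpa using hd1, rfl⟩, ?_⟩
        intro v hv
        rcases Sym2.mem_iff.mp hv with rfl | rfl
        · exact hd2 x (by simp)
        · exact hd2 y (by simp)
  have h2 : {e ∈ G.edgeSet | ∀ v ∈ e, ∃ h : v ∈ S, Q (Sum.inl ⟨v, h⟩)}
      = Sym2.map Subtype.val '' D := by
    ext e
    induction e using Sym2.ind with
    | _ u v =>
      constructor
      · rintro ⟨he, hQ⟩
        obtain ⟨hu, hQu⟩ := hQ u (by simp)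
        obtain ⟨hv, hQv⟩ := hQ v (by simp)
        refine ⟨s(⟨u, hu⟩, ⟨v, hv⟩), ⟨by simpa using he, ?_⟩, by simp⟩
        intro z hz
        rcases Sym2.mem_iff.mp hz with rfl | rfl <;> assumption
      · rintro ⟨d, hd, hde⟩
        induction d using Sym2.ind with
        | _ x y =>
          obtain ⟨hd1, hd2⟩ := hd
          rw [← hde]
          refine ⟨hd1, ?_⟩
          intro w hw
          rcases Sym2.mem_iff.mp hw with rfl | rfl
          · exact ⟨x.2, by simpa using hd2 x (by simp)⟩
          · exact ⟨y.2, by simpa using hd2 y (by simp)⟩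
  rw [h1, h2, Set.ncard_image_of_injective _ (Sym2.map.injective Sum.inl_injective),
    Set.ncard_image_of_injective _ (Sym2.map.injective Subtype.val_injective)]

lemma key_bound' [Fintype V] [DecidableEq V]
    (G : SimpleGraph V) (hG : IsCircuit G)
    (A B : Finset V) (a b : V) (hab : a ≠ b)
    (haA : a ∉ A) (haB : a ∉ B) (hbA : b ∉ A) (hbB : b ∉ B)
    (hdisj : ∀ x : V, ¬ (x ∈ A ∧ x ∈ B))
    (hfB : 2 * ((insert a (insert b B)).card : ℤ) -
      indEdges G ↑(insert a (insert b B)) = 2)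
    (Y : Finset V) (hYS : Y ⊆ insert a (insert b A)) (haY : a ∈ Y) (hbY : b ∈ Y)
    (hYne : Y ≠ insert a (insert b A)) :
    (indEdges G ↑Y : ℤ) ≤ 2 * Y.card - 3 := by
  classical
  set T : Finset V := insert a (insert b B) with hT
  set Z : Finset V := Y ∪ T with hZdef
  -- a vertex of A outside Y
  obtain ⟨x, hxS, hxY⟩ := Finset.exists_of_ssubset (hYS.ssubset_of_ne hYne)
  have hxA : x ∈ A := by
    rcases Finset.mem_insert.mp hxS with rfl | hxS
    · exact absurd haY hxY
    rcases Finset.mem_insert.mp hxS with rfl | hxS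
    · exact absurd hbY hxY
    · exact hxS
  have hxT : x ∉ T := by
    simp only [hT, Finset.mem_insert]
    push_neg
    exact ⟨fun h => haA (h ▸ hxA), fun h => hbA (h ▸ hxA), fun h => hdisj x ⟨hxA, h⟩⟩
  have hxZ : x ∉ Z := by simp [hZdef, hxY, hxT]
  have hZuniv : Z ⊂ Finset.univ :=
    Finset.ssubset_univ_iff.mpr (fun h => hxZ (h ▸ Finset.mem_univ x))
  have hZ := hG.2 Z hZuniv
  -- intersection of Y and T
  have hYT : Y ∩ T = {a, b} := by
    ext v
    simp only [Finset.mem_inter, Finset.mem_insert, Finset.mem_singleton]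
    constructor
    · rintro ⟨hvY, hvT⟩
      rcases Finset.mem_insert.mp (hYS hvY) with rfl | h
      · exact Or.inl rfl
      rcases Finset.mem_insert.mp h with rfl | hvA
      · exact Or.inr rfl
      · exfalso
        rcases Finset.mem_insert.mp hvT with rfl | h'
        · exact haA hvA
        rcases Finset.mem_insert.mp h' with rfl | hvB
        · exact hbA hvA
        · exact hdisj v ⟨hvA, hvB⟩
    · rintro (rfl | rfl)
      · exact ⟨haY, by simp [hT]⟩
      · exact ⟨hbY, by simp [hT]⟩
  have hcardZ : Z.card + 2 = Y.card + T.card := by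
    have := Finset.card_union_add_card_inter Y T
    rw [hYT] at this
    rwa [Finset.card_pair hab] at this
  -- edge sets
  set EY : Set (Sym2 V) := {e ∈ G.edgeSet | ∀ v ∈ e, v ∈ (↑Y : Set V)} with hEY
  set ET : Set (Sym2 V) := {e ∈ G.edgeSet | ∀ v ∈ e, v ∈ (↑T : Set V)} with hET
  set EZ : Set (Sym2 V) := {e ∈ G.edgeSet | ∀ v ∈ e, v ∈ (↑Z : Set V)} with hEZ
  have hsub : EY ∪ ET ⊆ EZ := by
    rintro e (⟨he, hv⟩ | ⟨he, hv⟩) <;>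
      exact ⟨he, fun v hve => by simp [hZdef]; first
        | exact Or.inl (hv v hve) | exact Or.inr (hv v hve)⟩
  have hfinY : EY.Finite := Set.toFinite _
  have hfinT : ET.Finite := Set.toFinite _
  have hinter : (EY ∩ ET).ncard ≤ 1 := by
    have : EY ∩ ET ⊆ {s(a, b)} := by
      rintro e ⟨⟨he, hvY⟩, ⟨_, hvT⟩⟩
      have hvab : ∀ v ∈ e, v = a ∨ v = b := by
        intro v hv
        have h1 := hvY v hv
        have h2 := hvT v hv
        have h1' := hYS (Finset.mem_coe.mp h1)
        have h2' := Finset.mem_coe.mp h2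
        rw [hT] at h2'
        simp only [Finset.mem_insert] at h1' h2'
        have h2 := h2'
        rcases h1' with rfl | rfl | hvA
        · exact Or.inl rfl
        · exact Or.inr rfl
        · exfalso
          rcases h2 with rfl | rfl | hvB
          · exact haA hvA
          · exact hbA hvA
          · exact hdisj v ⟨hvA, hvB⟩
      induction e using Sym2.ind with
      | _ u v =>
        have hne : u ≠ v := by
          intro h; exact G.not_isDiag_of_mem_edgeSet he (Sym2.mk_isDiag_iff.mpr h)
        rcases hvab u (by simp) with rfl | rfl <;> rcases hvab v (by simp) with rfl | rfl
        · exact absurd rfl hne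
        · simp
        · simp [Sym2.eq_swap]
        · exact absurd rfl hne
    calc (EY ∩ ET).ncard ≤ ({s(a,b)} : Set (Sym2 V)).ncard :=
          Set.ncard_le_ncard this (Set.toFinite _)
      _ = 1 := Set.ncard_singleton _
  have hunion : (EY ∪ ET).ncard + (EY ∩ ET).ncard = EY.ncard + ET.ncard :=
    Set.ncard_union_add_ncard_inter EY ET hfinY hfinT
  have hle : (EY ∪ ET).ncard ≤ EZ.ncard := Set.ncard_le_ncard hsub (Set.toFinite _)
  -- translate
  have eY : indEdges G ↑Y = EY.ncard := rfl
  have eT : indEdges G ↑T = ET.ncard := rfl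
  have eZ : indEdges G ↑Z = EZ.ncard := rfl
  rw [eY]
  rw [eT] at hfB
  rw [eZ] at hZ
  have haZ : a ∈ Z := Finset.mem_union_left _ haY
  have hZpos : 1 ≤ Z.card := Finset.card_pos.mpr ⟨a, haZ⟩
  have H1 : EY.ncard + ET.ncard ≤ EZ.ncard + 1 := by omega
  have h1 : (EZ.ncard : ℤ) ≤ 2 * Z.card - 2 := by
    have h2 : 2 ≤ 2 * Z.card := by omega
    omega
  omega

lemma side_circuit [Fintype V] [DecidableEq V]
    (G : SimpleGraph V) (hG : IsCircuit G)
    (A B : Finset V) (a b : V) (hab : a ≠ b)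
    (haA : a ∉ A) (haB : a ∉ B) (hbA : b ∉ A) (hbB : b ∉ B)
    (hdisj : ∀ x : V, ¬ (x ∈ A ∧ x ∈ B))
    (hBne : B.Nonempty)
    (hfA : 2 * ((insert a (insert b A)).card : ℤ) -
      indEdges G ↑(insert a (insert b A)) = 2)
    (hfB : 2 * ((insert a (insert b B)).card : ℤ) -
      indEdges G ↑(insert a (insert b B)) = 2) :
    IsCircuit (SimpleGraph.fromEdgeSet
      (({e | ∃ x y : {x : V // x ∈ insert a (insert b A)},
          G.Adj ↑x ↑y ∧ e = s(Sum.inl x, Sum.inl y)} :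
          Set (Sym2 ({x : V // x ∈ insert a (insert b A)} ⊕ Fin 2))) ∪
       {s(Sum.inl ⟨a, Finset.mem_insert_self a _⟩, Sum.inr 0),
        s(Sum.inl ⟨a, Finset.mem_insert_self a _⟩, Sum.inr 1),
        s(Sum.inl ⟨b, Finset.mem_insert_of_mem (Finset.mem_insert_self b A)⟩, Sum.inr 0),
        s(Sum.inl ⟨b, Finset.mem_insert_of_mem (Finset.mem_insert_self b A)⟩, Sum.inr 1),
        s(Sum.inr 0, Sum.inr 1)})) := by
  classical
  set S : Finset V := insert a (insert b A) with hS
  set W := ({x : V // x ∈ S} ⊕ Fin 2) with hW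
  set av : {x : V // x ∈ S} := ⟨a, Finset.mem_insert_self a _⟩ with hav
  set bv : {x : V // x ∈ S} := ⟨b, Finset.mem_insert_of_mem (Finset.mem_insert_self b A)⟩ with hbv
  set a' : W := Sum.inl av with ha'
  set b' : W := Sum.inl bv with hb'
  set c0 : W := Sum.inr 0 with hc0
  set c1 : W := Sum.inr 1 with hc1
  set E1 : Set (Sym2 W) :=
    {e | ∃ x y : {x : V // x ∈ S}, G.Adj ↑x ↑y ∧ e = s(Sum.inl x, Sum.inl y)} with hE1
  set E2 : Set (Sym2 W) :=
    {s(a', c0), s(a', c1), s(b', c0), s(b', c1), s(c0, c1)} with hE2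
  set H : SimpleGraph W := SimpleGraph.fromEdgeSet (E1 ∪ E2) with hH
  have havbv : av ≠ bv := fun h => hab (congrArg Subtype.val h)
  have hF : (0 : Fin 2) ≠ 1 := by decide
  have hrr : (Sum.inr (0 : Fin 2) : W) ≠ Sum.inr 1 := fun h => hF (Sum.inr_injective h)
  have hll : (Sum.inl av : W) ≠ Sum.inl bv := fun h => havbv (Sum.inl_injective h)
  have hlr : ∀ (x : {x : V // x ∈ S}) (i : Fin 2), (Sum.inl x : W) ≠ Sum.inr i :=
    fun x i h => by exact absurd h (by simp)
  -- no diagonal elements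
  have hnodiag : ∀ e ∈ E1 ∪ E2, ¬ e.IsDiag := by
    rintro e (⟨x, y, hxy, rfl⟩ | he)
    · simp only [Sym2.mk_isDiag_iff]
      intro h
      exact hxy.ne (congrArg Subtype.val (Sum.inl_injective h))
    · simp only [hE2, Set.mem_insert_iff, Set.mem_singleton_iff] at he
      rcases he with rfl | rfl | rfl | rfl | rfl <;>
        simp [Sym2.mk_isDiag_iff, ha', hb', hc0, hc1, hF, hrr, hll, hlr]
  have hE : H.edgeSet = E1 ∪ E2 := by
    rw [hH, SimpleGraph.edgeSet_fromEdgeSet]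
    ext e
    simp only [Set.mem_diff, Set.mem_setOf_eq]
    exact ⟨fun h => h.1, fun h => ⟨h, hnodiag e h⟩⟩
  -- disjointness
  have hdisjE : Disjoint E1 E2 := by
    rw [Set.disjoint_left]
    rintro e ⟨x, y, hxy, rfl⟩ he
    simp only [hE2, Set.mem_insert_iff, Set.mem_singleton_iff] at he
    rcases he with h | h | h | h | h <;>
      · rw [Sym2.eq_iff] at h
        simp [ha', hb', hc0, hc1] at h
  -- card of E2
  have hcE2 : E2.ncard = 5 := by
    rw [hE2]
    rw [Set.ncard_insert_of_notMem (by
      simp only [Set.mem_insert_iff, Set.mem_singleton_iff, Sym2.eq_iff]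
      push_neg
      refine ⟨⟨?_, ?_⟩, ⟨?_, ?_⟩, ⟨?_, ?_⟩, ⟨?_, ?_⟩⟩ <;>
        simp [ha', hb', hc0, hc1, havbv, havbv.symm, hF, hF.symm, hrr, hrr.symm, hll, hll.symm, hlr])]
    rw [Set.ncard_insert_of_notMem (by
      simp only [Set.mem_insert_iff, Set.mem_singleton_iff, Sym2.eq_iff]
      push_neg
      refine ⟨⟨?_, ?_⟩, ⟨?_, ?_⟩, ⟨?_, ?_⟩⟩ <;>
        simp [ha', hb', hc0, hc1, havbv, havbv.symm, hF, hF.symm, hrr, hrr.symm, hll, hll.symm, hlr])]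
    rw [Set.ncard_insert_of_notMem (by
      simp only [Set.mem_insert_iff, Set.mem_singleton_iff, Sym2.eq_iff]
      push_neg
      refine ⟨⟨?_, ?_⟩, ⟨?_, ?_⟩⟩ <;>
        simp [ha', hb', hc0, hc1, havbv, havbv.symm, hF, hF.symm, hrr, hrr.symm, hll, hll.symm, hlr])]
    rw [Set.ncard_insert_of_notMem (by
      simp only [Set.mem_singleton_iff, Sym2.eq_iff]
      push_neg
      refine ⟨?_, ?_⟩ <;>
        simp [ha', hb', hc0, hc1, havbv, havbv.symm, hF, hF.symm, hrr, hrr.symm, hll, hll.symm, hlr])]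
    rw [Set.ncard_singleton]
  -- card of E1
  have hcE1 : E1.ncard = indEdges G ↑S := by
    have h := ncard_lift G S (fun _ => True)
    have hA : {e : Sym2 W | (∃ x y : {x : V // x ∈ S},
        G.Adj ↑x ↑y ∧ e = s(Sum.inl x, Sum.inl y)) ∧ ∀ v ∈ e, True} = E1 := by
      ext e; simp [hE1]
    have hB : {e ∈ G.edgeSet | ∀ v ∈ e, ∃ _ : v ∈ S, True}
        = {e ∈ G.edgeSet | ∀ v ∈ e, v ∈ (↑S : Set V)} := by
      ext e; simp
    rw [hA, hB] at h
    exact h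
  have hcardW : Fintype.card W = S.card + 2 := by
    simp [hW, Fintype.card_sum, Fintype.card_coe]
  constructor
  · -- edge count
    rw [show (SimpleGraph.fromEdgeSet (E1 ∪ E2)).edgeSet = E1 ∪ E2 from hE,
      Set.ncard_union_eq hdisjE (Set.toFinite _) (Set.toFinite _), hcE1, hcE2, hcardW]
    push_cast
    omega
  · intro X hX
    have hXne : X ≠ Finset.univ := Finset.ssubset_univ_iff.mp hX
    set Xl : Finset {x : V // x ∈ S} := X.preimage Sum.inl Sum.inl_injective.injOn with hXl
    set Xr : Finset (Fin 2) := X.preimage Sum.inr Sum.inr_injective.injOn with hXr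
    set Y : Finset V := Xl.image Subtype.val with hYdef
    have hYmem : ∀ v : V, v ∈ Y ↔ ∃ h : v ∈ S, Sum.inl ⟨v, h⟩ ∈ X := by
      intro v
      simp only [hYdef, Finset.mem_image, hXl, Finset.mem_preimage]
      constructor
      · rintro ⟨x, hx, rfl⟩
        exact ⟨x.2, hx⟩
      · rintro ⟨h, hx⟩
        exact ⟨⟨v, h⟩, hx, rfl⟩
    have hYS : Y ⊆ S := by
      intro v hv
      obtain ⟨h, -⟩ := (hYmem v).mp hv
      exact h
    have hYcard : Y.card = Xl.card := Finset.card_image_of_injective _ Subtype.val_injective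
    have hXsplit : X = Xl.image Sum.inl ∪ Xr.image Sum.inr := by
      ext w
      cases w with
      | inl x =>
        simp only [Finset.mem_union, Finset.mem_image, hXl, hXr, Finset.mem_preimage]
        constructor
        · intro h
          exact Or.inl ⟨x, h, rfl⟩
        · rintro (⟨y, hy, h⟩ | ⟨i, hi, h⟩)
          · rwa [← Sum.inl_injective h]
          · exact absurd h (by simp)
      | inr i =>
        simp only [Finset.mem_union, Finset.mem_image, hXl, hXr, Finset.mem_preimage]
        constructor
        · intro h
          exact Or.inr ⟨i, h, rfl⟩
        · rintro (⟨y, hy, h⟩ | ⟨j, hj, h⟩)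
          · exact absurd h (by simp)
          · rwa [← Sum.inr_injective h]
    have hXcard : X.card = Xl.card + Xr.card := by
      rw [hXsplit, Finset.card_union_of_disjoint, Finset.card_image_of_injective _ Sum.inl_injective,
        Finset.card_image_of_injective _ Sum.inr_injective]
      rw [Finset.disjoint_left]
      rintro w hw hw'
      simp only [Finset.mem_image] at hw hw'
      obtain ⟨x, -, rfl⟩ := hw
      obtain ⟨i, -, h⟩ := hw'
      exact absurd h (by simp)
    have haX : a ∈ Y ↔ a' ∈ X := by
      rw [hYmem a]
      exact ⟨fun ⟨h, hx⟩ => hx, fun hx => ⟨av.2, hx⟩⟩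
    have hbX : b ∈ Y ↔ b' ∈ X := by
      rw [hYmem b]
      exact ⟨fun ⟨h, hx⟩ => hx, fun hx => ⟨bv.2, hx⟩⟩
    have hc0X : (0 : Fin 2) ∈ Xr ↔ c0 ∈ X := by simp [hXr, Finset.mem_preimage, hc0]
    have hc1X : (1 : Fin 2) ∈ Xr ↔ c1 ∈ X := by simp [hXr, Finset.mem_preimage, hc1]
    have hfin2 : ∀ i : Fin 2, i = 0 ∨ i = 1 := by decide
    -- Y is a proper subset of univ
    obtain ⟨w, hwB⟩ := hBne
    have hwS : w ∉ S := by
      simp only [hS, Finset.mem_insert]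
      push_neg
      exact ⟨fun h => haB (h ▸ hwB), fun h => hbB (h ▸ hwB), fun h => hdisj w ⟨h, hwB⟩⟩
    have hYproper : Y ⊂ Finset.univ :=
      Finset.ssubset_univ_iff.mpr (fun h => hwS (hYS (h ▸ Finset.mem_univ w)))
    have hGY := hG.2 Y hYproper
    -- decomposition of induced edges
    set N1s : Set (Sym2 W) := {e ∈ E1 | ∀ v ∈ e, v ∈ (↑X : Set W)} with hN1s
    set N2s : Set (Sym2 W) := {e ∈ E2 | ∀ v ∈ e, v ∈ (↑X : Set W)} with hN2s
    have hsplit2 : {e ∈ H.edgeSet | ∀ v ∈ e, v ∈ (↑X : Set W)} = N1s ∪ N2s := by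
      rw [hN1s, hN2s]
      ext e
      rw [Set.mem_sep_iff, hE]
      simp only [Set.mem_union, Set.mem_sep_iff]
      constructor
      · rintro ⟨h | h, hP⟩
        · exact Or.inl ⟨h, hP⟩
        · exact Or.inr ⟨h, hP⟩
      · rintro (⟨h, hP⟩ | ⟨h, hP⟩)
        · exact ⟨Or.inl h, hP⟩
        · exact ⟨Or.inr h, hP⟩
    have hdecomp : indEdges H ↑X = N1s.ncard + N2s.ncard := by
      rw [indEdges, hsplit2]
      exact Set.ncard_union_eq (hdisjE.mono (Set.sep_subset _ _) (Set.sep_subset _ _))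
        (Set.toFinite _) (Set.toFinite _)
    have hN1 : N1s.ncard = indEdges G ↑Y := by
      have h := ncard_lift G S (fun w => w ∈ X)
      have hA : {e : Sym2 W | (∃ x y : {x : V // x ∈ S},
          G.Adj ↑x ↑y ∧ e = s(Sum.inl x, Sum.inl y)) ∧ ∀ v ∈ e, v ∈ X} = N1s := by
        ext e
        simp [hN1s, hE1]
      have hB2 : {e ∈ G.edgeSet | ∀ v ∈ e, ∃ h : v ∈ S, Sum.inl ⟨v, h⟩ ∈ X}
          = {e ∈ G.edgeSet | ∀ v ∈ e, v ∈ (↑Y : Set V)} := by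
        ext e
        refine and_congr_right fun _ => forall₂_congr fun v _ => ?_
        rw [Finset.mem_coe, hYmem v]
      rw [hA, hB2] at h
      rw [h, indEdges]
    -- membership criterion for pairs
    have hmemP : ∀ u v : W, (∀ z ∈ s(u, v), z ∈ (↑X : Set W)) ↔ u ∈ X ∧ v ∈ X := by
      intro u v
      constructor
      · intro h
        exact ⟨h u (Sym2.mem_mk_left _ _), h v (Sym2.mem_mk_right _ _)⟩
      · rintro ⟨h1, h2⟩ z hz
        rcases Sym2.mem_iff.mp hz with rfl | rfl <;> assumption
    have hN2_5 : N2s.ncard ≤ 5 := by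
      rw [← hcE2]
      exact Set.ncard_le_ncard (Set.sep_subset _ _) (Set.toFinite _)
    have hpair2 : ∀ x y : Sym2 W, ({x, y} : Set (Sym2 W)).ncard ≤ 2 := by
      intro x y
      calc ({x, y} : Set (Sym2 W)).ncard ≤ ({y} : Set (Sym2 W)).ncard + 1 :=
            Set.ncard_insert_le _ _
        _ ≤ 2 := by simp
    have htriple : ∀ x y z : Sym2 W, ({x, y, z} : Set (Sym2 W)).ncard ≤ 3 := by
      intro x y z
      calc ({x, y, z} : Set (Sym2 W)).ncard ≤ ({y, z} : Set (Sym2 W)).ncard + 1 :=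
            Set.ncard_insert_le _ _
        _ ≤ 3 := by have := hpair2 y z; omega
    rw [hdecomp, hN1]
    by_cases h0 : c0 ∈ X <;> by_cases h1 : c1 ∈ X
    · -- both extra vertices present
      have hXr2 : Xr.card = 2 := by
        have he : Xr = Finset.univ := Finset.eq_univ_iff_forall.mpr (fun i => by
          rcases hfin2 i with rfl | rfl
          · exact hc0X.mpr h0
          · exact hc1X.mpr h1)
        rw [he, Finset.card_univ, Fintype.card_fin]
      by_cases haX2 : a' ∈ X <;> by_cases hbX2 : b' ∈ X
      · -- a and b both present: use the key bound
        have hYneS : Y ≠ S := by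
          intro hYeq
          apply hXne
          apply Finset.eq_univ_iff_forall.mpr
          intro w'
          cases w' with
          | inl x =>
            have hx : x.1 ∈ Y := by rw [hYeq]; exact x.2
            obtain ⟨h, hx2⟩ := (hYmem x.1).mp hx
            exact hx2
          | inr i =>
            rcases hfin2 i with rfl | rfl
            · exact h0
            · exact h1
        have hkey := key_bound' G hG A B a b hab haA haB hbA hbB hdisj hfB Y hYS
          (haX.mpr haX2) (hbX.mpr hbX2) hYneS
        omega
      · -- a present, b absent
        have hN2 : N2s.ncard ≤ 3 := by
          have hsub : N2s ⊆ {s(a', c0), s(a', c1), s(c0, c1)} := by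
            rintro e ⟨he, hP⟩
            simp only [hE2, Set.mem_insert_iff, Set.mem_singleton_iff] at he
            rcases he with rfl | rfl | rfl | rfl | rfl
            · exact Set.mem_insert _ _
            · exact Set.mem_insert_of_mem _ (Set.mem_insert _ _)
            · exact absurd ((hmemP _ _).mp hP).1 hbX2
            · exact absurd ((hmemP _ _).mp hP).1 hbX2
            · exact Set.mem_insert_of_mem _ (Set.mem_insert_of_mem _ rfl)
          exact (Set.ncard_le_ncard hsub (Set.toFinite _)).trans (htriple _ _ _)
        have hYpos : 1 ≤ Y.card := Finset.card_pos.mpr ⟨a, haX.mpr haX2⟩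
        omega
      · -- b present, a absent
        have hN2 : N2s.ncard ≤ 3 := by
          have hsub : N2s ⊆ {s(b', c0), s(b', c1), s(c0, c1)} := by
            rintro e ⟨he, hP⟩
            simp only [hE2, Set.mem_insert_iff, Set.mem_singleton_iff] at he
            rcases he with rfl | rfl | rfl | rfl | rfl
            · exact absurd ((hmemP _ _).mp hP).1 haX2
            · exact absurd ((hmemP _ _).mp hP).1 haX2
            · exact Set.mem_insert _ _
            · exact Set.mem_insert_of_mem _ (Set.mem_insert _ _)
            · exact Set.mem_insert_of_mem _ (Set.mem_insert_of_mem _ rfl)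
          exact (Set.ncard_le_ncard hsub (Set.toFinite _)).trans (htriple _ _ _)
        have hYpos : 1 ≤ Y.card := Finset.card_pos.mpr ⟨b, hbX.mpr hbX2⟩
        omega
      · -- neither a nor b
        have hN2 : N2s.ncard ≤ 1 := by
          have hsub : N2s ⊆ {s(c0, c1)} := by
            rintro e ⟨he, hP⟩
            simp only [hE2, Set.mem_insert_iff, Set.mem_singleton_iff] at he
            rcases he with rfl | rfl | rfl | rfl | rfl
            · exact absurd ((hmemP _ _).mp hP).1 haX2
            · exact absurd ((hmemP _ _).mp hP).1 haX2
            · exact absurd ((hmemP _ _).mp hP).1 hbX2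
            · exact absurd ((hmemP _ _).mp hP).1 hbX2
            · rfl
          exact (Set.ncard_le_ncard hsub (Set.toFinite _)).trans (by simp)
        omega
    · -- only c0
      have hXr1 : Xr.card = 1 := by
        have he : Xr = {0} := by
          ext i
          rcases hfin2 i with rfl | rfl
          · simp [hc0X.mpr h0]
          · simp only [Finset.mem_singleton]
            constructor
            · intro hi
              exact absurd (hc1X.mp hi) h1
            · intro hi
              exact absurd hi (by decide)
        rw [he, Finset.card_singleton]
      by_cases haX2 : a' ∈ X
      · have hN2 : N2s.ncard ≤ 2 := by
          have hsub : N2s ⊆ {s(a', c0), s(b', c0)} := by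
            rintro e ⟨he, hP⟩
            simp only [hE2, Set.mem_insert_iff, Set.mem_singleton_iff] at he
            rcases he with rfl | rfl | rfl | rfl | rfl
            · exact Set.mem_insert _ _
            · exact absurd ((hmemP _ _).mp hP).2 h1
            · exact Set.mem_insert_of_mem _ rfl
            · exact absurd ((hmemP _ _).mp hP).2 h1
            · exact absurd ((hmemP _ _).mp hP).2 h1
          exact (Set.ncard_le_ncard hsub (Set.toFinite _)).trans (hpair2 _ _)
        have hYpos : 1 ≤ Y.card := Finset.card_pos.mpr ⟨a, haX.mpr haX2⟩
        omega
      · by_cases hbX2 : b' ∈ X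
        · have hN2 : N2s.ncard ≤ 2 := by
            have hsub : N2s ⊆ {s(a', c0), s(b', c0)} := by
              rintro e ⟨he, hP⟩
              simp only [hE2, Set.mem_insert_iff, Set.mem_singleton_iff] at he
              rcases he with rfl | rfl | rfl | rfl | rfl
              · exact Set.mem_insert _ _
              · exact absurd ((hmemP _ _).mp hP).2 h1
              · exact Set.mem_insert_of_mem _ rfl
              · exact absurd ((hmemP _ _).mp hP).2 h1
              · exact absurd ((hmemP _ _).mp hP).2 h1
            exact (Set.ncard_le_ncard hsub (Set.toFinite _)).trans (hpair2 _ _)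
          have hYpos : 1 ≤ Y.card := Finset.card_pos.mpr ⟨b, hbX.mpr hbX2⟩
          omega
        · have hN2 : N2s.ncard = 0 := by
            have hsub : N2s ⊆ (∅ : Set (Sym2 W)) := by
              rintro e ⟨he, hP⟩
              simp only [hE2, Set.mem_insert_iff, Set.mem_singleton_iff] at he
              rcases he with rfl | rfl | rfl | rfl | rfl
              · exact absurd ((hmemP _ _).mp hP).1 haX2
              · exact absurd ((hmemP _ _).mp hP).1 haX2
              · exact absurd ((hmemP _ _).mp hP).1 hbX2
              · exact absurd ((hmemP _ _).mp hP).1 hbX2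
              · exact absurd ((hmemP _ _).mp hP).2 h1
            have := Set.ncard_le_ncard hsub (Set.toFinite _)
            simpa using this
          omega
    · -- only c1
      have hXr1 : Xr.card = 1 := by
        have he : Xr = {1} := by
          ext i
          rcases hfin2 i with rfl | rfl
          · simp only [Finset.mem_singleton]
            constructor
            · intro hi
              exact absurd (hc0X.mp hi) h0
            · intro hi
              exact absurd hi (by decide)
          · simp [hc1X.mpr h1]
        rw [he, Finset.card_singleton]
      by_cases haX2 : a' ∈ X
      · have hN2 : N2s.ncard ≤ 2 := by
          have hsub : N2s ⊆ {s(a', c1), s(b', c1)} := by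
            rintro e ⟨he, hP⟩
            simp only [hE2, Set.mem_insert_iff, Set.mem_singleton_iff] at he
            rcases he with rfl | rfl | rfl | rfl | rfl
            · exact absurd ((hmemP _ _).mp hP).2 h0
            · exact Set.mem_insert _ _
            · exact absurd ((hmemP _ _).mp hP).2 h0
            · exact Set.mem_insert_of_mem _ rfl
            · exact absurd ((hmemP _ _).mp hP).1 h0
          exact (Set.ncard_le_ncard hsub (Set.toFinite _)).trans (hpair2 _ _)
        have hYpos : 1 ≤ Y.card := Finset.card_pos.mpr ⟨a, haX.mpr haX2⟩
        omega
      · by_cases hbX2 : b' ∈ X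
        · have hN2 : N2s.ncard ≤ 2 := by
            have hsub : N2s ⊆ {s(a', c1), s(b', c1)} := by
              rintro e ⟨he, hP⟩
              simp only [hE2, Set.mem_insert_iff, Set.mem_singleton_iff] at he
              rcases he with rfl | rfl | rfl | rfl | rfl
              · exact absurd ((hmemP _ _).mp hP).2 h0
              · exact Set.mem_insert _ _
              · exact absurd ((hmemP _ _).mp hP).2 h0
              · exact Set.mem_insert_of_mem _ rfl
              · exact absurd ((hmemP _ _).mp hP).1 h0
            exact (Set.ncard_le_ncard hsub (Set.toFinite _)).trans (hpair2 _ _)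
          have hYpos : 1 ≤ Y.card := Finset.card_pos.mpr ⟨b, hbX.mpr hbX2⟩
          omega
        · have hN2 : N2s.ncard = 0 := by
            have hsub : N2s ⊆ (∅ : Set (Sym2 W)) := by
              rintro e ⟨he, hP⟩
              simp only [hE2, Set.mem_insert_iff, Set.mem_singleton_iff] at he
              rcases he with rfl | rfl | rfl | rfl | rfl
              · exact absurd ((hmemP _ _).mp hP).1 haX2
              · exact absurd ((hmemP _ _).mp hP).1 haX2
              · exact absurd ((hmemP _ _).mp hP).1 hbX2
              · exact absurd ((hmemP _ _).mp hP).1 hbX2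
              · exact absurd ((hmemP _ _).mp hP).1 h0
            have := Set.ncard_le_ncard hsub (Set.toFinite _)
            simpa using this
          omega
    · -- neither extra vertex
      have hXr0 : Xr.card = 0 := by
        rw [Finset.card_eq_zero]
        apply Finset.eq_empty_iff_forall_notMem.mpr
        intro i hi
        rcases hfin2 i with rfl | rfl
        · exact h0 (hc0X.mp hi)
        · exact h1 (hc1X.mp hi)
      have hN2 : N2s.ncard = 0 := by
        have hsub : N2s ⊆ (∅ : Set (Sym2 W)) := by
          rintro e ⟨he, hP⟩
          simp only [hE2, Set.mem_insert_iff, Set.mem_singleton_iff] at he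
          rcases he with rfl | rfl | rfl | rfl | rfl
          · exact absurd ((hmemP _ _).mp hP).2 h0
          · exact absurd ((hmemP _ _).mp hP).2 h1
          · exact absurd ((hmemP _ _).mp hP).2 h0
          · exact absurd ((hmemP _ _).mp hP).2 h1
          · exact absurd ((hmemP _ _).mp hP).1 h0
        have := Set.ncard_le_ncard hsub (Set.toFinite _)
        simpa using this
      omega

/-- The 2-separation over a cut pair `{a, b}` with `ab ∈ E` and
`f(G[A∪{a,b}]) = f(G[B∪{a,b}]) = 2`: each side together with two new vertices
(the `Fin 2` part) forming a `K₄` on `{a, b, c, d}` (keeping a single copy of `ab`)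
is a circuit. -/
theorem two_separation_circuits [Fintype V] [DecidableEq V]
    (G : SimpleGraph V) (hG : IsCircuit G)
    (A B : Finset V) (a b : V) (hab : a ≠ b)
    (haA : a ∉ A) (haB : a ∉ B) (hbA : b ∉ A) (hbB : b ∉ B)
    (hdisj : ∀ x : V, ¬ (x ∈ A ∧ x ∈ B))
    (hpart : ∀ x : V, x ∈ A ∨ x ∈ B ∨ x = a ∨ x = b)
    (hAne : A.Nonempty) (hBne : B.Nonempty)
    (hnoAB : ∀ x ∈ A, ∀ y ∈ B, ¬ G.Adj x y)
    (hadjab : G.Adj a b)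
    (hfA : 2 * ((insert a (insert b A)).card : ℤ) -
      indEdges G ↑(insert a (insert b A)) = 2)
    (hfB : 2 * ((insert a (insert b B)).card : ℤ) -
      indEdges G ↑(insert a (insert b B)) = 2) :
    IsCircuit (SimpleGraph.fromEdgeSet
      (({e | ∃ x y : {x : V // x ∈ insert a (insert b A)},
          G.Adj ↑x ↑y ∧ e = s(Sum.inl x, Sum.inl y)} :
          Set (Sym2 ({x : V // x ∈ insert a (insert b A)} ⊕ Fin 2))) ∪
       {s(Sum.inl ⟨a, Finset.mem_insert_self a _⟩, Sum.inr 0),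
        s(Sum.inl ⟨a, Finset.mem_insert_self a _⟩, Sum.inr 1),
        s(Sum.inl ⟨b, Finset.mem_insert_of_mem (Finset.mem_insert_self b A)⟩, Sum.inr 0),
        s(Sum.inl ⟨b, Finset.mem_insert_of_mem (Finset.mem_insert_self b A)⟩, Sum.inr 1),
        s(Sum.inr 0, Sum.inr 1)})) ∧
    IsCircuit (SimpleGraph.fromEdgeSet
      (({e | ∃ x y : {x : V // x ∈ insert a (insert b B)},
          G.Adj ↑x ↑y ∧ e = s(Sum.inl x, Sum.inl y)} :
          Set (Sym2 ({x : V // x ∈ insert a (insert b B)} ⊕ Fin 2))) ∪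
       {s(Sum.inl ⟨a, Finset.mem_insert_self a _⟩, Sum.inr 0),
        s(Sum.inl ⟨a, Finset.mem_insert_self a _⟩, Sum.inr 1),
        s(Sum.inl ⟨b, Finset.mem_insert_of_mem (Finset.mem_insert_self b B)⟩, Sum.inr 0),
        s(Sum.inl ⟨b, Finset.mem_insert_of_mem (Finset.mem_insert_self b B)⟩, Sum.inr 1),
        s(Sum.inr 0, Sum.inr 1)})) := by
  constructor
  · exact side_circuit G hG A B a b hab haA haB hbA hbB hdisj hBne hfA hfB
  · exact side_circuit G hG B A a b hab haB haA hbB hbA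
      (fun x hx => hdisj x ⟨hx.2, hx.1⟩) hAne hfB hfA
end

section
/- Let G=(V,E) be a 3-connected circuit in the simple (2,2)-sparsity matroid containing a degree-3 vertex v with N(v)={w,u,z}, where uz ∉ E and wz, wu ∈ E. Then v is admissible: there exist two neighbours of v such that deleting v and joining them yields a circuit in the simple (2,2)-sparsity matroid (specifically, deleting v and adding the edge zu works). -/
variable {V : Type*}

/-- The inverse Henneberg 2 move: delete the vertex `v` (and its incident edges)
and add the edge `pq` between two of its former neighbours. -/
def delAdd (G : SimpleGraph V) (v : V) (p q : {x : V // x ≠ v}) :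
    SimpleGraph {x : V // x ≠ v} :=
  SimpleGraph.fromEdgeSet
    ({e | ∃ x y : {x : V // x ≠ v}, G.Adj ↑x ↑y ∧ e = s(x, y)} ∪ {s(p, q)})

/-- `G` is 3-connected: removing any set of at most 2 vertices leaves a connected
graph. -/
def ThreeConnected (G : SimpleGraph V) : Prop :=
  ∀ S : Set V, S.ncard ≤ 2 → (G.induce Sᶜ).Connected

lemma aux_insert [Finite V] (G : SimpleGraph V) (v : V) (X : Set V) (hv : v ∉ X) :
    indEdges G (insert v X) = indEdges G X + (G.neighborSet v ∩ X).ncard := by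
  classical
  have hdecomp : {e ∈ G.edgeSet | ∀ a ∈ e, a ∈ insert v X}
      = {e ∈ G.edgeSet | ∀ a ∈ e, a ∈ X} ∪ (fun y => s(v, y)) '' (G.neighborSet v ∩ X) := by
    ext e
    induction e using Sym2.ind with
    | _ a b =>
      simp only [Set.mem_union, Set.mem_sep_iff, Set.mem_image, Set.mem_inter_iff,
        SimpleGraph.mem_edgeSet, Sym2.mem_iff, SimpleGraph.mem_neighborSet,
        Set.mem_insert_iff]
      constructor
      · rintro ⟨hab, hmem⟩
        have ha := hmem a (Or.inl rfl)
        have hb := hmem b (Or.inr rfl)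
        rcases ha with rfl | ha
        · rcases hb with rfl | hb
          · exact absurd hab (G.loopless.irrefl _)
          · exact Or.inr ⟨b, ⟨hab, hb⟩, rfl⟩
        · rcases hb with rfl | hb
          · exact Or.inr ⟨a, ⟨hab.symm, ha⟩, Sym2.eq_swap⟩
          · exact Or.inl ⟨hab, fun c hc => by rcases hc with rfl | rfl
                                              exacts [ha, hb]⟩
      · rintro (⟨hab, hmem⟩ | ⟨y, ⟨hvy, hyX⟩, heq⟩)
        · exact ⟨hab, fun c hc => Or.inr (hmem c (by simpa using hc))⟩
        · rcases Sym2.eq_iff.mp heq with ⟨rfl, rfl⟩ | ⟨rfl, rfl⟩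
          · exact ⟨hvy, fun c hc => by rcases hc with rfl | rfl
                                       exacts [Or.inl rfl, Or.inr hyX]⟩
          · exact ⟨hvy.symm, fun c hc => by rcases hc with rfl | rfl
                                            exacts [Or.inr hyX, Or.inl rfl]⟩
  have hdisj : Disjoint {e ∈ G.edgeSet | ∀ a ∈ e, a ∈ X}
      ((fun y => s(v, y)) '' (G.neighborSet v ∩ X)) := by
    rw [Set.disjoint_right]
    rintro e ⟨y, ⟨hvy, hyX⟩, rfl⟩ ⟨he, hmem⟩
    exact hv (hmem v (Sym2.mem_mk_left v y))
  have hinj : Set.InjOn (fun y => s(v, y)) (G.neighborSet v ∩ X) := by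
    intro y1 _ y2 _ h
    exact Sym2.congr_right.mp h
  rw [indEdges, hdecomp, Set.ncard_union_eq hdisj (Set.toFinite _) (Set.toFinite _),
    Set.ncard_image_of_injOn hinj]
  rfl

open scoped Classical in
lemma aux_master [Finite V] (G : SimpleGraph V) (v : V) (z u : {x : V // x ≠ v})
    (hzu : z ≠ u) (hne : ¬ G.Adj ↑z ↑u) (X : Set {x : V // x ≠ v}) :
    indEdges (delAdd G v z u) X
      = indEdges G (Subtype.val '' X) + (if z ∈ X ∧ u ∈ X then 1 else 0) := by
  have hE' : (delAdd G v z u).edgeSet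
      = {e | ∃ x y : {x : V // x ≠ v}, G.Adj ↑x ↑y ∧ e = s(x, y)} ∪ {s(z, u)} := by
    rw [delAdd, SimpleGraph.edgeSet_fromEdgeSet]
    rw [sdiff_eq_self_iff_disjoint, Set.disjoint_left]
    rintro e hd he
    rcases he with ⟨x, y, hxy, rfl⟩ | he
    · have hxyeq : x = y := Sym2.mk_isDiag_iff.mp hd
      exact (G.ne_of_adj hxy (congrArg Subtype.val hxyeq)).elim
    · rw [Set.mem_singleton_iff] at he
      subst he
      exact hzu (Sym2.mk_isDiag_iff.mp hd)
  have hinj : Function.Injective (Sym2.map (Subtype.val : {x : V // x ≠ v} → V)) :=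
    Sym2.map.injective Subtype.val_injective
  have himg : Sym2.map Subtype.val '' {e ∈ (delAdd G v z u).edgeSet | ∀ a ∈ e, a ∈ X}
      = {e ∈ G.edgeSet | ∀ a ∈ e, a ∈ Subtype.val '' X}
        ∪ (if z ∈ X ∧ u ∈ X then {s((z : V), (u : V))} else ∅) := by
    ext e
    constructor
    · rintro ⟨e', ⟨heE, hmem⟩, rfl⟩
      rw [hE'] at heE
      rcases heE with ⟨x, y, hxy, rfl⟩ | he
      · left
        rw [Sym2.map_pair_eq]
        refine ⟨hxy, fun c hc => ?_⟩
        rcases Sym2.mem_iff.mp hc with rfl | rfl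
        · exact ⟨x, hmem x (Sym2.mem_mk_left x y), rfl⟩
        · exact ⟨y, hmem y (Sym2.mem_mk_right x y), rfl⟩
      · rw [Set.mem_singleton_iff] at he
        subst he
        right
        rw [if_pos ⟨hmem z (Sym2.mem_mk_left z u), hmem u (Sym2.mem_mk_right z u)⟩,
          Sym2.map_pair_eq]
        rfl
    · rintro (he | he)
      · obtain ⟨heE, hmem⟩ := he
        induction e using Sym2.ind with
        | _ a b =>
          have ha := hmem a (Sym2.mem_mk_left a b)
          have hb := hmem b (Sym2.mem_mk_right a b)
          obtain ⟨a', ha', rfl⟩ := ha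
          obtain ⟨b', hb', rfl⟩ := hb
          refine ⟨s(a', b'), ⟨?_, ?_⟩, by rw [Sym2.map_pair_eq]⟩
          · rw [hE']
            exact Or.inl ⟨a', b', heE, rfl⟩
          · intro c hc
            rcases Sym2.mem_iff.mp hc with rfl | rfl
            exacts [ha', hb']
      · split_ifs at he with h
        · rw [Set.mem_singleton_iff] at he
          subst he
          refine ⟨s(z, u), ⟨?_, ?_⟩, by rw [Sym2.map_pair_eq]⟩
          · rw [hE']; exact Or.inr rfl
          · intro c hc
            rcases Sym2.mem_iff.mp hc with rfl | rfl
            exacts [h.1, h.2]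
        · exact absurd he (Set.notMem_empty e)
  have hcount : indEdges (delAdd G v z u) X
      = ({e ∈ G.edgeSet | ∀ a ∈ e, a ∈ Subtype.val '' X}
        ∪ (if z ∈ X ∧ u ∈ X then {s((z : V), (u : V))} else ∅)).ncard := by
    rw [indEdges, ← himg, Set.ncard_image_of_injective _ hinj]
  have hdisj : Disjoint {e ∈ G.edgeSet | ∀ a ∈ e, a ∈ Subtype.val '' X}
      ({s((z : V), (u : V))} : Set (Sym2 V)) := by
    rw [Set.disjoint_right]
    rintro e he ⟨heE, _⟩
    rw [Set.mem_singleton_iff] at he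
    subst he
    exact hne heE
  rw [hcount]
  by_cases h : z ∈ X ∧ u ∈ X
  · simp only [if_pos h]
    rw [Set.ncard_union_eq hdisj (Set.toFinite _) (Set.toFinite _), Set.ncard_singleton,
      indEdges]
  · simp only [if_neg h]
    rw [Set.union_empty, indEdges, Nat.add_zero]

lemma indEdges_univ (G : SimpleGraph V) : indEdges G Set.univ = G.edgeSet.ncard := by
  unfold indEdges
  congr 1
  ext e
  simp

/-- A node `v` with neighbours `w, u, z` such that `uz ∉ E` and `wz, wu ∈ E` is
admissible in a 3-connected circuit. -/
theorem node_admissible_two_edges [Fintype V] [DecidableEq V]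
    (G : SimpleGraph V) (hG : IsCircuit G) (h3 : ThreeConnected G)
    (v : V) (w u z : {x : V // x ≠ v})
    (hdeg : deg G v = 3)
    (hN : G.neighborSet v = {↑w, ↑u, ↑z})
    (hwu' : w ≠ u) (hwz' : w ≠ z) (huz' : u ≠ z)
    (huz : ¬ G.Adj ↑u ↑z) (hwz : G.Adj ↑w ↑z) (hwu : G.Adj ↑w ↑u) :
    ∃ p q : {x : V // x ≠ v}, G.Adj v ↑p ∧ G.Adj v ↑q ∧ p ≠ q ∧
      ¬ G.Adj ↑p ↑q ∧ IsCircuit (delAdd G v p q) := by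
  classical
  have hvw : G.Adj v ↑w := by
    have h : (↑w : V) ∈ G.neighborSet v := by rw [hN]; simp
    exact h
  have hvu : G.Adj v ↑u := by
    have h : (↑u : V) ∈ G.neighborSet v := by rw [hN]; simp
    exact h
  have hvz : G.Adj v ↑z := by
    have h : (↑z : V) ∈ G.neighborSet v := by rw [hN]; simp
    exact h
  have hzu : z ≠ u := Ne.symm huz'
  have hne : ¬ G.Adj ↑z ↑u := fun h => huz h.symm
  have hdeg' : (G.neighborSet v).ncard = 3 := hdeg
  have hwv : (↑w : V) ≠ v := w.2
  have huv : (↑u : V) ≠ v := u.2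
  have hzv : (↑z : V) ≠ v := z.2
  have huzv : (↑u : V) ≠ ↑z := Subtype.coe_ne_coe.mpr huz'
  have hzuv : (↑z : V) ≠ ↑u := Ne.symm huzv
  have hn1 : 1 ≤ Fintype.card V := @Fintype.card_pos V _ ⟨v⟩
  have hcV : Fintype.card {x : V // x ≠ v} + 1 = Fintype.card V := by
    have h1 : Fintype.card {x : V // ¬ x = v} = Fintype.card V - Fintype.card {x : V // x = v} :=
      Fintype.card_subtype_compl _
    rw [Fintype.card_subtype_eq] at h1
    have h2 : Fintype.card {x : V // x ≠ v} = Fintype.card {x : V // ¬ x = v} := rfl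
    omega
  have hEuniv : G.edgeSet.ncard = indEdges G ({v}ᶜ) + 3 := by
    have h1 := aux_insert G v ({v}ᶜ : Set V) (by simp)
    have h2 : insert v ({v}ᶜ : Set V) = Set.univ := by
      ext x; by_cases hx : x = v <;> simp [hx]
    have h3' : G.neighborSet v ∩ ({v}ᶜ : Set V) = G.neighborSet v :=
      Set.inter_eq_left.mpr (fun t ht => by
        simp only [Set.mem_compl_iff, Set.mem_singleton_iff]
        exact fun hh => G.loopless.irrefl v (hh ▸ ht))
    rw [h2, indEdges_univ, h3', hdeg'] at h1
    omega
  have hcompl : (Subtype.val '' (Set.univ : Set {x : V // x ≠ v})) = ({v}ᶜ : Set V) := by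
    rw [Set.image_univ, Subtype.range_coe_subtype]
    ext x; exact Iff.rfl
  refine ⟨z, u, hvz, hvu, hzu, hne, ?_, ?_⟩
  · -- edge count
    have e1 : (delAdd G v z u).edgeSet.ncard = indEdges (delAdd G v z u) Set.univ :=
      (indEdges_univ _).symm
    have e2 := aux_master G v z u hzu hne Set.univ
    rw [if_pos ⟨Set.mem_univ _, Set.mem_univ _⟩, hcompl] at e2
    have hg1 := hG.1
    rw [e1, e2]
    omega
  · intro X hX
    have hmaster := aux_master G v z u hzu hne (↑X)
    set S : Set V := Subtype.val '' (↑X : Set {x : V // x ≠ v}) with hS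
    have hvS : v ∉ S := by
      rintro ⟨y, _, hy⟩
      exact y.2 hy
    set F : Finset V := X.image Subtype.val with hF
    have hFcoe : (↑F : Set V) = S := by rw [hF, Finset.coe_image]
    have hFcard : F.card = X.card := Finset.card_image_of_injective _ Subtype.val_injective
    have hvF : v ∉ F := by
      intro hv
      exact hvS (hFcoe ▸ hv)
    have hFss : F ⊂ Finset.univ := by
      rw [Finset.ssubset_univ_iff]
      intro hFu
      exact hvF (hFu ▸ Finset.mem_univ v)
    have hb := hG.2 F hFss
    rw [hFcoe, hFcard] at hb
    by_cases hzuX : z ∈ (↑X : Set {x : V // x ≠ v}) ∧ u ∈ (↑X : Set {x : V // x ≠ v})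
    · rw [hmaster, if_pos hzuX]
      by_contra hcon
      push_neg at hcon
      have hX2 : 2 ≤ X.card := Finset.one_lt_card.mpr ⟨z, Finset.mem_coe.mp hzuX.1, u, Finset.mem_coe.mp hzuX.2, hzu⟩
      have htight : indEdges G S = 2 * X.card - 2 := by omega
      have hzS : (↑z : V) ∈ S := ⟨z, hzuX.1, rfl⟩
      have huS : (↑u : V) ∈ S := ⟨u, hzuX.2, rfl⟩
      obtain ⟨y0, hy0u, hy0X⟩ := Finset.exists_of_ssubset hX
      have hins := aux_insert G v S hvS
      by_cases hwX : w ∈ X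
      · have hNS : G.neighborSet v ∩ S = G.neighborSet v :=
          Set.inter_eq_left.mpr (by
            rw [hN]
            rintro t (rfl | rfl | rfl)
            exacts [⟨w, Finset.mem_coe.mpr hwX, rfl⟩, ⟨u, hzuX.2, rfl⟩, ⟨z, hzuX.1, rfl⟩])
        rw [hNS, hdeg'] at hins
        have hproper : insert v F ⊂ Finset.univ := by
          rw [Finset.ssubset_univ_iff]
          intro hq
          have hy0 : (↑y0 : V) ∈ insert v F := hq ▸ Finset.mem_univ _
          rcases Finset.mem_insert.mp hy0 with h' | h'
          · exact y0.2 h'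
          · apply hy0X
            have hy0S : (↑y0 : V) ∈ S := hFcoe ▸ h'
            obtain ⟨y1, hy1, hy1e⟩ := hy0S
            rwa [← Subtype.val_injective hy1e]
        have hb2 := hG.2 (insert v F) hproper
        rw [Finset.coe_insert, hFcoe, Finset.card_insert_of_notMem hvF, hFcard] at hb2
        rw [hins] at hb2
        omega
      · -- w ∉ X
        have hwS : (↑w : V) ∉ S := by
          rintro ⟨y1, hy1, hy1e⟩
          exact hwX (Subtype.val_injective hy1e ▸ hy1)
        have hNS : G.neighborSet v ∩ S = {(↑u : V), ↑z} := by
          rw [hN]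
          ext t
          simp only [Set.mem_inter_iff, Set.mem_insert_iff, Set.mem_singleton_iff]
          constructor
          · rintro ⟨(rfl | rfl | rfl), htS⟩
            · exact absurd htS hwS
            · exact Or.inl rfl
            · exact Or.inr rfl
          · rintro (rfl | rfl)
            · exact ⟨Or.inr (Or.inl rfl), huS⟩
            · exact ⟨Or.inr (Or.inr rfl), hzS⟩
        rw [hNS, Set.ncard_pair huzv] at hins
        have hwvS : (↑w : V) ∉ insert v S := by
          simp only [Set.mem_insert_iff]
          rintro (h' | h')
          exacts [hwv h', hwS h']
        have hins2 := aux_insert G (↑w) (insert v S) hwvS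
        have hsub3 : ({v, ↑u, ↑z} : Set V) ⊆ G.neighborSet ↑w ∩ insert v S := by
          rintro t (rfl | rfl | rfl)
          · exact ⟨hvw.symm, Set.mem_insert _ _⟩
          · exact ⟨hwu, Set.mem_insert_of_mem _ huS⟩
          · exact ⟨hwz, Set.mem_insert_of_mem _ hzS⟩
        have hvu' : v ≠ (↑u : V) := Ne.symm huv
        have hvz' : v ≠ (↑z : V) := Ne.symm hzv
        have hcard3 : ({v, ↑u, ↑z} : Set V).ncard = 3 := by
          rw [Set.ncard_insert_of_notMem (by
            simp only [Set.mem_insert_iff, Set.mem_singleton_iff]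
            rintro (h' | h')
            exacts [hvu' h', hvz' h']) (Set.toFinite _), Set.ncard_pair huzv]
        have h3le : 3 ≤ (G.neighborSet ↑w ∩ insert v S).ncard := by
          rw [← hcard3]
          exact Set.ncard_le_ncard hsub3 (Set.toFinite _)
        have hwvF : (↑w : V) ∉ insert v F := by
          intro hq
          rcases Finset.mem_insert.mp hq with h' | h'
          · exact hwv h'
          · exact hwS (hFcoe ▸ h')
        have huniveq : insert (↑w : V) (insert v F) = Finset.univ := by
          by_contra hne'
          have hb3 := hG.2 _ (Finset.ssubset_univ_iff.mpr hne')
          rw [Finset.coe_insert, Finset.coe_insert, hFcoe,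
            Finset.card_insert_of_notMem hwvF, Finset.card_insert_of_notMem hvF, hFcard] at hb3
          rw [hins2, hins] at hb3
          omega
        have hczu : ({z, u} : Finset {x : V // x ≠ v}).card = 2 := by
          rw [Finset.card_insert_of_notMem (by simp [hzu]), Finset.card_singleton]
        have hX3 : 3 ≤ X.card := by
          by_contra hlt
          push_neg at hlt
          have hsubzu : ({z, u} : Finset {x : V // x ≠ v}) ⊆ X := by
            intro t ht
            rcases Finset.mem_insert.mp ht with rfl | ht
            · exact Finset.mem_coe.mp hzuX.1
            · exact (Finset.mem_singleton.mp ht) ▸ Finset.mem_coe.mp hzuX.2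
          have hXeq : ({z, u} : Finset {x : V // x ≠ v}) = X :=
            Finset.eq_of_subset_of_card_le hsubzu (by omega)
          have hSeq : S = {(↑z : V), ↑u} := by
            rw [hS, ← hXeq]
            simp only [Finset.coe_insert, Finset.coe_singleton, Set.image_insert_eq,
              Set.image_singleton]
          have hXc2 : X.card = 2 := by rw [← hXeq]; exact hczu
          have hzero : indEdges G S = 0 := by
            rw [hSeq]
            unfold indEdges
            rw [Set.ncard_eq_zero (Set.toFinite _)]
            ext e
            induction e using Sym2.ind with
            | _ a b =>
              simp only [Set.mem_sep_iff, SimpleGraph.mem_edgeSet, Sym2.mem_iff,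
                Set.mem_insert_iff, Set.mem_singleton_iff, Set.mem_empty_iff_false, iff_false,
                not_and]
              intro hab hmem
              have ha := hmem a (Or.inl rfl)
              have hb' := hmem b (Or.inr rfl)
              rcases ha with rfl | rfl <;> rcases hb' with rfl | rfl
              · exact G.loopless.irrefl _ hab
              · exact hne hab
              · exact hne hab.symm
              · exact G.loopless.irrefl _ hab
          omega
        obtain ⟨x, hxX, hxz, hxu⟩ : ∃ x ∈ X, x ≠ z ∧ x ≠ u := by
          by_contra hno
          push_neg at hno
          have hXsub : X ⊆ ({z, u} : Finset {x : V // x ≠ v}) := by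
            intro t ht
            by_cases htz : t = z
            · subst htz; exact Finset.mem_insert_self _ _
            · have := hno t ht htz
              subst this
              exact Finset.mem_insert_of_mem (Finset.mem_singleton_self _)
          have := Finset.card_le_card hXsub
          omega
        have hunivS : (Set.univ : Set V) = insert (↑w : V) (insert v S) := by
          rw [← Finset.coe_univ, ← huniveq, Finset.coe_insert, Finset.coe_insert, hFcoe]
        have hNwsub : G.neighborSet (↑w : V) ⊆ insert v S := by
          intro t ht
          have htu : t ∈ (Set.univ : Set V) := Set.mem_univ t
          rw [hunivS] at htu
          rcases htu with rfl | htu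
          · exact absurd ht (G.loopless.irrefl _)
          · exact htu
        have hNwinter : G.neighborSet (↑w : V) ∩ insert v S = G.neighborSet (↑w : V) :=
          Set.inter_eq_left.mpr hNwsub
        rw [hNwinter] at hins2
        have hEq1 : indEdges G (insert (↑w : V) (insert v S)) = G.edgeSet.ncard := by
          rw [← hunivS, indEdges_univ]
        have hcardX : X.card + 2 = Fintype.card V := by
          have hcu : (insert (↑w : V) (insert v F)).card = X.card + 2 := by
            rw [Finset.card_insert_of_notMem hwvF, Finset.card_insert_of_notMem hvF, hFcard]
          rw [huniveq, Finset.card_univ] at hcu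
          omega
        have hg1 := hG.1
        have hdegw : (G.neighborSet (↑w : V)).ncard = 3 := by omega
        have hNweq : G.neighborSet (↑w : V) = {v, ↑u, ↑z} := by
          refine (Set.eq_of_subset_of_ncard_le ?_ ?_ (Set.toFinite _)).symm
          · rintro t (rfl | rfl | rfl)
            exacts [hvw.symm, hwu, hwz]
          · rw [hdegw, hcard3]
        have hconn := h3 {(↑u : V), ↑z} (le_of_eq (Set.ncard_pair huzv))
        have hvSc : v ∈ ({(↑u : V), ↑z} : Set V)ᶜ := by
          simp only [Set.mem_compl_iff, Set.mem_insert_iff, Set.mem_singleton_iff]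
          rintro (h' | h')
          exacts [huv h'.symm, hzv h'.symm]
        have hxSc : (↑x : V) ∈ ({(↑u : V), ↑z} : Set V)ᶜ := by
          simp only [Set.mem_compl_iff, Set.mem_insert_iff, Set.mem_singleton_iff]
          rintro (h' | h')
          exacts [hxu (Subtype.val_injective h'), hxz (Subtype.val_injective h')]
        have hkey : ∀ (a b : ↥(({(↑u : V), ↑z} : Set V)ᶜ))
            (p : (SimpleGraph.induce (({(↑u : V), ↑z} : Set V)ᶜ) G).Walk a b),
            ((a : V) = v ∨ (a : V) = ↑w) → ((b : V) = v ∨ (b : V) = ↑w) := by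
          intro a b p
          induction p with
          | nil => exact id
          | @cons a' c b' h q ih =>
            intro ha
            apply ih
            have hadj : G.Adj ↑a' ↑c := h
            rcases ha with h1 | h1
            · rw [h1] at hadj
              have hmem : (↑c : V) ∈ G.neighborSet v := hadj
              rw [hN] at hmem
              rcases hmem with h2 | h2 | h2
              · exact Or.inr h2
              · exact absurd (show (↑c : V) ∈ ({(↑u : V), ↑z} : Set V) by
                  rw [h2]; exact Set.mem_insert _ _) c.2
              · exact absurd (show (↑c : V) ∈ ({(↑u : V), ↑z} : Set V) by
                  rw [h2]; exact Set.mem_insert_of_mem _ rfl) c.2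
            · rw [h1] at hadj
              have hmem : (↑c : V) ∈ G.neighborSet (↑w : V) := hadj
              rw [hNweq] at hmem
              rcases hmem with h2 | h2 | h2
              · exact Or.inl h2
              · exact absurd (show (↑c : V) ∈ ({(↑u : V), ↑z} : Set V) by
                  rw [h2]; exact Set.mem_insert _ _) c.2
              · exact absurd (show (↑c : V) ∈ ({(↑u : V), ↑z} : Set V) by
                  rw [h2]; exact Set.mem_insert_of_mem _ rfl) c.2
        obtain ⟨pw⟩ := hconn.preconnected ⟨v, hvSc⟩ ⟨↑x, hxSc⟩
        rcases hkey _ _ pw (Or.inl rfl) with h' | h'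
        · exact x.2 h'
        · have hxw : (↑x : V) = (↑w : V) := h'
          exact hwX (Subtype.val_injective hxw ▸ hxX)
    · rw [hmaster, if_neg hzuX]
      omega
end

section
/- Let G=(V,E) be a circuit in the simple (2,2)-sparsity matroid with |V| ≥ 6, and let v be a non-admissible degree-3 vertex with neighbours x, y, z such that none of xy, xz, yz is an edge of G. Then there exist two critical sets X, Y ⊊ V with X ∪ Y = V∖{v}, each containing exactly two of the neighbours of v (and not containing v), and X, Y can be chosen so that z ∈ X ∩ Y. -/
variable {V : Type*}

/-- A critical set: it induces exactly `2|X| - 2` edges. -/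
def IsCritical (G : SimpleGraph V) (X : Finset V) : Prop :=
  (indEdges G ↑X : ℤ) = 2 * X.card - 2

lemma indEdges_mono [Finite V] (G : SimpleGraph V) {A B : Set V} (h : A ⊆ B) :
    indEdges G A ≤ indEdges G B := by
  apply Set.ncard_le_ncard _ (Set.toFinite _)
  rintro e ⟨he, hA⟩
  exact ⟨he, fun w hw => h (hA w hw)⟩

lemma indEdges_submod [Finite V] (G : SimpleGraph V) (A B : Set V) :
    indEdges G A + indEdges G B ≤ indEdges G (A ∪ B) + indEdges G (A ∩ B) := by
  have hEI : {e ∈ G.edgeSet | ∀ v ∈ e, v ∈ A} ∩ {e ∈ G.edgeSet | ∀ v ∈ e, v ∈ B}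
      = {e ∈ G.edgeSet | ∀ v ∈ e, v ∈ A ∩ B} := by
    ext e; constructor
    · rintro ⟨⟨he, hA⟩, ⟨_, hB⟩⟩; exact ⟨he, fun w hw => ⟨hA w hw, hB w hw⟩⟩
    · rintro ⟨he, hAB⟩; exact ⟨⟨he, fun w hw => (hAB w hw).1⟩, ⟨he, fun w hw => (hAB w hw).2⟩⟩
  have hEU : {e ∈ G.edgeSet | ∀ v ∈ e, v ∈ A} ∪ {e ∈ G.edgeSet | ∀ v ∈ e, v ∈ B}
      ⊆ {e ∈ G.edgeSet | ∀ v ∈ e, v ∈ A ∪ B} := by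
    rintro e (⟨he, hA⟩ | ⟨he, hB⟩)
    · exact ⟨he, fun w hw => Or.inl (hA w hw)⟩
    · exact ⟨he, fun w hw => Or.inr (hB w hw)⟩
  calc indEdges G A + indEdges G B
      = ({e ∈ G.edgeSet | ∀ v ∈ e, v ∈ A} ∪ {e ∈ G.edgeSet | ∀ v ∈ e, v ∈ B}).ncard
        + ({e ∈ G.edgeSet | ∀ v ∈ e, v ∈ A} ∩ {e ∈ G.edgeSet | ∀ v ∈ e, v ∈ B}).ncard :=
        (Set.ncard_union_add_ncard_inter _ _ (Set.toFinite _) (Set.toFinite _)).symm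
    _ ≤ indEdges G (A ∪ B) + indEdges G (A ∩ B) := by
        rw [hEI]
        exact Nat.add_le_add (Set.ncard_le_ncard hEU (Set.toFinite _)) le_rfl

lemma indEdges_insert_ge [Finite V] (G : SimpleGraph V) {X : Set V} {v a b c : V}
    (hv : v ∉ X) (ha : a ∈ X) (hb : b ∈ X) (hc : c ∈ X)
    (hab : a ≠ b) (hac : a ≠ c) (hbc : b ≠ c)
    (hva : G.Adj v a) (hvb : G.Adj v b) (hvc : G.Adj v c) :
    indEdges G X + 3 ≤ indEdges G (insert v X) := by
  have hsub : {e ∈ G.edgeSet | ∀ w ∈ e, w ∈ X} ∪ {s(v,a), s(v,b), s(v,c)}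
      ⊆ {e ∈ G.edgeSet | ∀ w ∈ e, w ∈ insert v X} := by
    rintro e (⟨he, hX⟩ | he)
    · exact ⟨he, fun w hw => Set.mem_insert_of_mem _ (hX w hw)⟩
    · rcases he with rfl | rfl | rfl
      · refine ⟨hva, fun w hw => ?_⟩
        rcases Sym2.mem_iff.mp hw with rfl | rfl
        · exact Set.mem_insert _ _
        · exact Set.mem_insert_of_mem _ ha
      · refine ⟨hvb, fun w hw => ?_⟩
        rcases Sym2.mem_iff.mp hw with rfl | rfl
        · exact Set.mem_insert _ _
        · exact Set.mem_insert_of_mem _ hb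
      · refine ⟨hvc, fun w hw => ?_⟩
        rcases Sym2.mem_iff.mp hw with rfl | rfl
        · exact Set.mem_insert _ _
        · exact Set.mem_insert_of_mem _ hc
  have hdisj : Disjoint {e ∈ G.edgeSet | ∀ w ∈ e, w ∈ X} ({s(v,a), s(v,b), s(v,c)} : Set (Sym2 V)) := by
    rw [Set.disjoint_right]
    rintro e (rfl | rfl | rfl) ⟨_, hX⟩ <;>
      exact hv (hX v (Sym2.mem_iff.mpr (Or.inl rfl)))
  have hcard3 : ({s(v,a), s(v,b), s(v,c)} : Set (Sym2 V)).ncard = 3 := by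
    have h1 : s(v,a) ≠ s(v,b) := by
      intro heq
      rcases Sym2.eq_iff.mp heq with ⟨-, h⟩ | ⟨h, -⟩
      · exact hab h
      · exact G.ne_of_adj hvb h
    have h2 : s(v,a) ≠ s(v,c) := by
      intro heq
      rcases Sym2.eq_iff.mp heq with ⟨-, h⟩ | ⟨h, -⟩
      · exact hac h
      · exact G.ne_of_adj hvc h
    have h3 : s(v,b) ≠ s(v,c) := by
      intro heq
      rcases Sym2.eq_iff.mp heq with ⟨-, h⟩ | ⟨h, -⟩
      · exact hbc h
      · exact G.ne_of_adj hvc h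
    rw [Set.ncard_insert_of_notMem (by simp [h1, h2]) (Set.toFinite _),
        Set.ncard_insert_of_notMem (by simp [h3]) (Set.toFinite _), Set.ncard_singleton]
  calc indEdges G X + 3
      = ({e ∈ G.edgeSet | ∀ w ∈ e, w ∈ X} ∪ {s(v,a), s(v,b), s(v,c)}).ncard := by
        rw [Set.ncard_union_eq hdisj (Set.toFinite _) (Set.toFinite _), hcard3]; rfl
    _ ≤ indEdges G (insert v X) := Set.ncard_le_ncard hsub (Set.toFinite _)

lemma mem_delAdd {G : SimpleGraph V} {v : V} {p q : {x : V // x ≠ v}} (hpq : p ≠ q)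
    (e : Sym2 {x : V // x ≠ v}) :
    e ∈ (delAdd G v p q).edgeSet ↔
      (∃ a b : {x : V // x ≠ v}, G.Adj ↑a ↑b ∧ e = s(a, b)) ∨ e = s(p, q) := by
  rw [delAdd, SimpleGraph.edgeSet_fromEdgeSet]
  constructor
  · rintro ⟨h, -⟩; exact h
  · rintro h
    refine ⟨h, ?_⟩
    rcases h with ⟨a, b, hab, rfl⟩ | rfl
    · simp only [Sym2.diagSet, Set.mem_setOf_eq, Sym2.mk_isDiag_iff]
      rintro rfl
      exact G.irrefl hab
    · simp only [Sym2.diagSet, Set.mem_setOf_eq, Sym2.mk_isDiag_iff]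
      exact hpq

lemma delAdd_edgeSet_image {G : SimpleGraph V} {v : V} {p q : {x : V // x ≠ v}} (hpq : p ≠ q) :
    Sym2.map (Subtype.val) '' (delAdd G v p q).edgeSet
      = {e ∈ G.edgeSet | v ∉ e} ∪ {s(↑p, ↑q)} := by
  ext e
  constructor
  · rintro ⟨e', he', rfl⟩
    rcases (mem_delAdd hpq e').mp he' with ⟨a, b, hab, rfl⟩ | rfl
    · left
      refine ⟨hab, ?_⟩
      simp only [Sym2.map_pair_eq, Sym2.mem_iff]
      rintro (h | h)
      · exact a.2 h.symm
      · exact b.2 h.symm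
    · right; simp
  · rintro (⟨he, hv⟩ | rfl)
    · induction e with
      | _ c d =>
        have hc : c ≠ v := fun h => hv (by rw [h] at *; exact Sym2.mem_mk_left _ _)
        have hd : d ≠ v := fun h => hv (by rw [h] at *; exact Sym2.mem_mk_right _ _)
        refine ⟨s(⟨c, hc⟩, ⟨d, hd⟩), ?_, by simp⟩
        exact (mem_delAdd hpq _).mpr (Or.inl ⟨⟨c, hc⟩, ⟨d, hd⟩, he, rfl⟩)
    · exact ⟨s(p, q), (mem_delAdd hpq _).mpr (Or.inr rfl), by simp⟩

lemma delAdd_edgeSet_ncard [Fintype V] [DecidableEq V] {G : SimpleGraph V} {v : V}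
    {p q : {x : V // x ≠ v}} (hpq : p ≠ q) (hnadj : ¬ G.Adj ↑p ↑q)
    (hdeg : deg G v = 3) (hE : 3 ≤ G.edgeSet.ncard) :
    (delAdd G v p q).edgeSet.ncard = G.edgeSet.ncard - 2 := by
  have hinj : Function.Injective (Sym2.map (Subtype.val : {x : V // x ≠ v} → V)) :=
    Sym2.map.injective Subtype.val_injective
  have h1 : (delAdd G v p q).edgeSet.ncard
      = ({e ∈ G.edgeSet | v ∉ e} ∪ {s(↑p, ↑q)} : Set (Sym2 V)).ncard := by
    rw [← delAdd_edgeSet_image hpq, Set.ncard_image_of_injective _ hinj]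
  have hdisj : Disjoint {e ∈ G.edgeSet | v ∉ e} ({s(↑p, ↑q)} : Set (Sym2 V)) := by
    rw [Set.disjoint_right]
    rintro e rfl ⟨he, -⟩
    exact hnadj he
  have hic : (G.incidenceSet v).ncard = 3 := by
    rw [← hdeg, deg, ← Nat.card_coe_set_eq, ← Nat.card_coe_set_eq]
    exact Nat.card_congr (G.incidenceSetEquivNeighborSet v)
  have h2 : ({e ∈ G.edgeSet | v ∉ e} : Set (Sym2 V)) = G.edgeSet \ G.incidenceSet v := by
    ext e
    constructor
    · rintro ⟨he, hv⟩; exact ⟨he, fun h => hv h.2⟩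
    · rintro ⟨he, hv⟩; exact ⟨he, fun h => hv ⟨he, h⟩⟩
  have h3 : ({e ∈ G.edgeSet | v ∉ e} : Set (Sym2 V)).ncard = G.edgeSet.ncard - 3 := by
    rw [h2, Set.ncard_diff (fun e he => he.1) (Set.toFinite _), hic]
  rw [h1, Set.ncard_union_eq hdisj (Set.toFinite _) (Set.toFinite _), h3, Set.ncard_singleton]
  omega

lemma delAdd_ind_aux [DecidableEq V] {G : SimpleGraph V} {v : V} {p q : {x : V // x ≠ v}}
    (hpq : p ≠ q) (X' : Finset {x : V // x ≠ v}) :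
    Sym2.map Subtype.val '' {e ∈ (delAdd G v p q).edgeSet | ∀ w ∈ e, w ∈ (X' : Set {x : V // x ≠ v})}
      ⊆ insert s(↑p, ↑q) {e ∈ G.edgeSet | ∀ w ∈ e, w ∈ ((X'.image Subtype.val : Finset V) : Set V)} := by
  rintro e ⟨e', ⟨he', hX⟩, rfl⟩
  rcases (mem_delAdd hpq e').mp he' with ⟨a, b, hab, rfl⟩ | rfl
  · refine Set.mem_insert_of_mem _ ⟨hab, ?_⟩
    simp only [Sym2.map_pair_eq, Sym2.mem_iff]
    rintro w (rfl | rfl)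
    · exact Finset.mem_coe.mpr (Finset.mem_image_of_mem _ (hX a (Sym2.mem_mk_left _ _)))
    · exact Finset.mem_coe.mpr (Finset.mem_image_of_mem _ (hX b (Sym2.mem_mk_right _ _)))
  · exact Set.mem_insert_iff.mpr (Or.inl (by simp))

lemma delAdd_indEdges_le [DecidableEq V] [Finite V] {G : SimpleGraph V} {v : V}
    {p q : {x : V // x ≠ v}} (hpq : p ≠ q) (X' : Finset {x : V // x ≠ v}) :
    indEdges (delAdd G v p q) ↑X' ≤ indEdges G ↑(X'.image Subtype.val) + 1 := by
  have hinj : Function.Injective (Sym2.map (Subtype.val : {x : V // x ≠ v} → V)) :=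
    Sym2.map.injective Subtype.val_injective
  calc indEdges (delAdd G v p q) ↑X'
      = (Sym2.map Subtype.val ''
          {e ∈ (delAdd G v p q).edgeSet | ∀ w ∈ e, w ∈ (X' : Set {x : V // x ≠ v})}).ncard :=
        (Set.ncard_image_of_injective _ hinj).symm
    _ ≤ (insert s(↑p, ↑q)
          {e ∈ G.edgeSet | ∀ w ∈ e, w ∈ ((X'.image Subtype.val : Finset V) : Set V)}).ncard :=
        Set.ncard_le_ncard (delAdd_ind_aux hpq X') (Set.toFinite _)
    _ ≤ _ + 1 := Set.ncard_insert_le _ _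

lemma delAdd_indEdges_le' [DecidableEq V] [Finite V] {G : SimpleGraph V} {v : V}
    {p q : {x : V // x ≠ v}} (hpq : p ≠ q) (X' : Finset {x : V // x ≠ v})
    (hnot : p ∉ X' ∨ q ∉ X') :
    indEdges (delAdd G v p q) ↑X' ≤ indEdges G ↑(X'.image Subtype.val) := by
  have hinj : Function.Injective (Sym2.map (Subtype.val : {x : V // x ≠ v} → V)) :=
    Sym2.map.injective Subtype.val_injective
  have hsub : Sym2.map Subtype.val ''
      {e ∈ (delAdd G v p q).edgeSet | ∀ w ∈ e, w ∈ (X' : Set {x : V // x ≠ v})}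
      ⊆ {e ∈ G.edgeSet | ∀ w ∈ e, w ∈ ((X'.image Subtype.val : Finset V) : Set V)} := by
    rintro e ⟨e', ⟨he', hX⟩, rfl⟩
    rcases (mem_delAdd hpq e').mp he' with ⟨a, b, hab, rfl⟩ | rfl
    · refine ⟨hab, ?_⟩
      simp only [Sym2.map_pair_eq, Sym2.mem_iff]
      rintro w (rfl | rfl)
      · exact Finset.mem_coe.mpr (Finset.mem_image_of_mem _ (hX a (Sym2.mem_mk_left _ _)))
      · exact Finset.mem_coe.mpr (Finset.mem_image_of_mem _ (hX b (Sym2.mem_mk_right _ _)))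
    · exfalso
      rcases hnot with h | h
      · exact h (hX p (Sym2.mem_mk_left _ _))
      · exact h (hX q (Sym2.mem_mk_right _ _))
  calc indEdges (delAdd G v p q) ↑X'
      = (Sym2.map Subtype.val ''
          {e ∈ (delAdd G v p q).edgeSet | ∀ w ∈ e, w ∈ (X' : Set {x : V // x ≠ v})}).ncard :=
        (Set.ncard_image_of_injective _ hinj).symm
    _ ≤ _ := Set.ncard_le_ncard hsub (Set.toFinite _)

lemma exists_vcritical [Fintype V] [DecidableEq V]
    (G : SimpleGraph V) (hG : IsCircuit G) (hV : 6 ≤ Fintype.card V)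
    (v : V) (hdeg : deg G v = 3)
    (p q r : {t : V // t ≠ v})
    (hN : G.neighborSet v = {↑p, ↑q, ↑r})
    (hpq : p ≠ q) (hpr : p ≠ r) (hqr : q ≠ r)
    (hnadj : ¬ G.Adj ↑p ↑q)
    (hnc : ¬ IsCircuit (delAdd G v p q)) :
    ∃ X : Finset V, X ⊂ Finset.univ ∧ IsCritical G X ∧
      ↑p ∈ X ∧ ↑q ∈ X ∧ v ∉ X ∧ ↑r ∉ X ∧ X ⊆ Finset.univ \ {v} := by
  have hAdj : ∀ w : V, w ∈ ({↑p, ↑q, ↑r} : Set V) → G.Adj v w := by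
    intro w hw
    rw [← hN] at hw
    exact hw
  have hvp : G.Adj v ↑p := hAdj _ (by simp)
  have hvq : G.Adj v ↑q := hAdj _ (by simp)
  have hvr : G.Adj v ↑r := hAdj _ (by simp)
  have hcpq : (↑p : V) ≠ ↑q := fun h => hpq (Subtype.ext h)
  have hcpr : (↑p : V) ≠ ↑r := fun h => hpr (Subtype.ext h)
  have hcqr : (↑q : V) ≠ ↑r := fun h => hqr (Subtype.ext h)
  have hcard : Fintype.card {t : V // t ≠ v} = Fintype.card V - 1 := by
    simp [Fintype.card_subtype_compl]
  have hEnat : G.edgeSet.ncard = 2 * Fintype.card V - 1 := by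
    have := hG.1; omega
  have hcount : ((delAdd G v p q).edgeSet.ncard : ℤ)
      = 2 * Fintype.card {t : V // t ≠ v} - 1 := by
    rw [delAdd_edgeSet_ncard hpq hnadj hdeg (by omega), hEnat, hcard]
    omega
  have hnotsp : ¬ ∀ X' : Finset {t : V // t ≠ v}, X' ⊂ Finset.univ →
      indEdges (delAdd G v p q) ↑X' ≤ 2 * X'.card - 2 :=
    fun h => hnc ⟨hcount, h⟩
  push_neg at hnotsp
  obtain ⟨X', hss, hgt⟩ := hnotsp
  set X : Finset V := X'.image Subtype.val with hXdef
  have hcardX : X.card = X'.card := Finset.card_image_of_injective _ Subtype.val_injective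
  have hvX : v ∉ X := by
    simp only [hXdef, Finset.mem_image]
    rintro ⟨t, -, ht⟩
    exact t.2 ht
  have hXss : X ⊂ Finset.univ :=
    Finset.ssubset_univ_iff.mpr (fun h => hvX (h ▸ Finset.mem_univ v))
  have hsp : indEdges G ↑X ≤ 2 * X.card - 2 := hG.2 X hXss
  have hle1 : indEdges (delAdd G v p q) ↑X' ≤ indEdges G ↑X + 1 := delAdd_indEdges_le hpq X'
  have hp' : p ∈ X' := by
    by_contra h
    have h2 := delAdd_indEdges_le' (G := G) hpq X' (Or.inl h)
    rw [← hXdef] at h2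
    omega
  have hq' : q ∈ X' := by
    by_contra h
    have h2 := delAdd_indEdges_le' (G := G) hpq X' (Or.inr h)
    rw [← hXdef] at h2
    omega
  have hcard2 : 2 ≤ X'.card := Finset.one_lt_card.mpr ⟨p, hp', q, hq', hpq⟩
  have hcrit_nat : indEdges G ↑X = 2 * X.card - 2 := by omega
  have hcrit : IsCritical G X := by
    show (indEdges G ↑X : ℤ) = 2 * X.card - 2
    omega
  have hpX : (↑p : V) ∈ X := Finset.mem_image_of_mem _ hp'
  have hqX : (↑q : V) ∈ X := Finset.mem_image_of_mem _ hq'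
  have hXsub : X ⊆ Finset.univ \ {v} := by
    intro t ht
    rw [Finset.mem_sdiff, Finset.mem_singleton]
    refine ⟨Finset.mem_univ t, ?_⟩
    simp only [hXdef, Finset.mem_image] at ht
    obtain ⟨t', -, rfl⟩ := ht
    exact t'.2
  have hcardlt : X.card < Fintype.card V - 1 := by
    have h1 : X'.card < Fintype.card {t : V // t ≠ v} := by
      rw [← Finset.card_univ]
      exact Finset.card_lt_card hss
    omega
  have hrX : (↑r : V) ∉ X := by
    intro hr
    have hins : insert v X ⊂ Finset.univ := by
      rw [Finset.ssubset_univ_iff]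
      intro h
      have := Finset.card_insert_of_notMem hvX
      rw [h, Finset.card_univ] at this
      omega
    have hsp2 : indEdges G ↑(insert v X) ≤ 2 * (insert v X).card - 2 := hG.2 _ hins
    have hge : indEdges G ↑X + 3 ≤ indEdges G (insert v (↑X : Set V)) :=
      indEdges_insert_ge G hvX hpX hqX hr hcpq hcpr hcqr hvp hvq hvr
    rw [Finset.coe_insert] at hsp2
    rw [Finset.card_insert_of_notMem hvX] at hsp2
    omega
  exact ⟨X, hXss, hcrit, hpX, hqX, hvX, hrX, hXsub⟩

lemma sparsity_int [Fintype V] {G : SimpleGraph V} (hG : IsCircuit G) {X : Finset V}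
    (hX : X ⊂ Finset.univ) : (indEdges G ↑X : ℤ) ≤ 2 * X.card - 2 ∨ X.card = 0 := by
  have := hG.2 X hX
  omega

/-- If `v` is a non-admissible node whose neighbours `x, y, z` span no edges, then
there are two critical sets `X` (containing `y, z` but not `x, v`) and `Y`
(containing `x, z` but not `y, v`) with `X ∪ Y = V ∖ {v}` and `z ∈ X ∩ Y`. -/
theorem nonadmissible_node_critical_cover [Fintype V] [DecidableEq V]
    (G : SimpleGraph V) (hG : IsCircuit G) (hV : 6 ≤ Fintype.card V)
    (v : V) (x y z : {t : V // t ≠ v})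
    (hdeg : deg G v = 3)
    (hN : G.neighborSet v = {↑x, ↑y, ↑z})
    (hxy : x ≠ y) (hxz : x ≠ z) (hyz : y ≠ z)
    (hexy : ¬ G.Adj ↑x ↑y) (hexz : ¬ G.Adj ↑x ↑z) (heyz : ¬ G.Adj ↑y ↑z)
    (hnonadm : ∀ p q : {t : V // t ≠ v}, G.Adj v ↑p → G.Adj v ↑q → p ≠ q →
      ¬ IsCircuit (delAdd G v p q)) :
    ∃ X Y : Finset V, X ⊂ Finset.univ ∧ Y ⊂ Finset.univ ∧
      IsCritical G X ∧ IsCritical G Y ∧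
      X ∪ Y = Finset.univ \ {v} ∧ v ∉ X ∧ v ∉ Y ∧
      ↑y ∈ X ∧ ↑z ∈ X ∧ ↑x ∉ X ∧
      ↑x ∈ Y ∧ ↑z ∈ Y ∧ ↑y ∉ Y := by
  have hAdj : ∀ w : V, w ∈ ({↑x, ↑y, ↑z} : Set V) → G.Adj v w := by
    intro w hw; rw [← hN] at hw; exact hw
  have hvx : G.Adj v ↑x := hAdj _ (by simp)
  have hvy : G.Adj v ↑y := hAdj _ (by simp)
  have hvz : G.Adj v ↑z := hAdj _ (by simp)
  have hcxy : (↑x : V) ≠ ↑y := fun h => hxy (Subtype.ext h)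
  have hcxz : (↑x : V) ≠ ↑z := fun h => hxz (Subtype.ext h)
  have hcyz : (↑y : V) ≠ ↑z := fun h => hyz (Subtype.ext h)
  have hN1 : G.neighborSet v = {(↑y : V), ↑z, ↑x} := by
    rw [hN]; ext w; simp only [Set.mem_insert_iff, Set.mem_singleton_iff]; tauto
  have hN2 : G.neighborSet v = {(↑x : V), ↑z, ↑y} := by
    rw [hN]; ext w; simp only [Set.mem_insert_iff, Set.mem_singleton_iff]; tauto
  obtain ⟨X₁, hX1ss, hcrit1, hy1, hz1, hv1, hx1, hsub1⟩ :=
    exists_vcritical G hG hV v hdeg y z x hN1 hyz hxy.symm hxz.symm heyz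
      (hnonadm y z hvy hvz hyz)
  obtain ⟨X₂, hX2ss, hcrit2, hx2, hz2, hv2, hy2, hsub2⟩ :=
    exists_vcritical G hG hV v hdeg x z y hN2 hxz hxy hyz.symm hexz
      (hnonadm x z hvx hvz hxz)
  -- submodularity
  have hsubmod : indEdges G ↑X₁ + indEdges G ↑X₂
      ≤ indEdges G ↑(X₁ ∪ X₂) + indEdges G ↑(X₁ ∩ X₂) := by
    rw [Finset.coe_union, Finset.coe_inter]
    exact indEdges_submod G _ _
  have hvU : v ∉ X₁ ∪ X₂ := by
    rw [Finset.mem_union]; rintro (h | h); exacts [hv1 h, hv2 h]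
  have hUss : X₁ ∪ X₂ ⊂ Finset.univ :=
    Finset.ssubset_univ_iff.mpr (fun h => hvU (h ▸ Finset.mem_univ v))
  have hIss : X₁ ∩ X₂ ⊂ Finset.univ :=
    lt_of_le_of_lt Finset.inter_subset_left hX1ss
  have hcard1 : 2 ≤ X₁.card := Finset.one_lt_card.mpr ⟨↑y, hy1, ↑z, hz1, hcyz⟩
  have hcard2 : 2 ≤ X₂.card := Finset.one_lt_card.mpr ⟨↑x, hx2, ↑z, hz2, hcxz⟩
  have hcardI : 1 ≤ (X₁ ∩ X₂).card :=
    Finset.card_pos.mpr ⟨↑z, Finset.mem_inter.mpr ⟨hz1, hz2⟩⟩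
  have hcardU : 2 ≤ (X₁ ∪ X₂).card :=
    le_trans hcard1 (Finset.card_le_card Finset.subset_union_left)
  have hspU := sparsity_int hG hUss
  have hspI := sparsity_int hG hIss
  have hcards : (X₁ ∪ X₂).card + (X₁ ∩ X₂).card = X₁.card + X₂.card :=
    Finset.card_union_add_card_inter X₁ X₂
  have hc1 : (indEdges G ↑X₁ : ℤ) = 2 * X₁.card - 2 := hcrit1
  have hc2 : (indEdges G ↑X₂ : ℤ) = 2 * X₂.card - 2 := hcrit2
  have hcritU : IsCritical G (X₁ ∪ X₂) := by
    show (indEdges G ↑(X₁ ∪ X₂) : ℤ) = 2 * (X₁ ∪ X₂).card - 2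
    rcases hspU with hspU | h; swap
    · omega
    rcases hspI with hspI | h; swap
    · omega
    have hsub' : (indEdges G ↑X₁ : ℤ) + indEdges G ↑X₂
        ≤ indEdges G ↑(X₁ ∪ X₂) + indEdges G ↑(X₁ ∩ X₂) := by exact_mod_cast hsubmod
    have hcards' : ((X₁ ∪ X₂).card : ℤ) + (X₁ ∩ X₂).card = X₁.card + X₂.card := by
      exact_mod_cast hcards
    linarith
  -- the union is everything except v
  have hUsub : X₁ ∪ X₂ ⊆ Finset.univ \ {v} := Finset.union_subset hsub1 hsub2
  have hUeq : X₁ ∪ X₂ = Finset.univ \ {v} := by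
    by_contra hne
    have hlt : (X₁ ∪ X₂).card < Fintype.card V - 1 := by
      have h1 : (X₁ ∪ X₂).card < (Finset.univ \ ({v} : Finset V)).card :=
        Finset.card_lt_card (lt_of_le_of_ne hUsub hne)
      rw [Finset.card_sdiff_of_subset (by simp), Finset.card_singleton, Finset.card_univ] at h1
      exact h1
    have hins : insert v (X₁ ∪ X₂) ⊂ Finset.univ := by
      rw [Finset.ssubset_univ_iff]
      intro h
      have := Finset.card_insert_of_notMem hvU
      rw [h, Finset.card_univ] at this
      omega
    have hsp2 : indEdges G ↑(insert v (X₁ ∪ X₂)) ≤ 2 * (insert v (X₁ ∪ X₂)).card - 2 :=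
      hG.2 _ hins
    have hxU : (↑x : V) ∈ X₁ ∪ X₂ := Finset.mem_union_right _ hx2
    have hyU : (↑y : V) ∈ X₁ ∪ X₂ := Finset.mem_union_left _ hy1
    have hzU : (↑z : V) ∈ X₁ ∪ X₂ := Finset.mem_union_left _ hz1
    have hge : indEdges G ↑(X₁ ∪ X₂) + 3 ≤ indEdges G (insert v (↑(X₁ ∪ X₂) : Set V)) :=
      indEdges_insert_ge G hvU hxU hyU hzU hcxy hcxz hcyz hvx hvy hvz
    rw [Finset.coe_insert] at hsp2
    rw [Finset.card_insert_of_notMem hvU] at hsp2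
    have hUnat : (indEdges G ↑(X₁ ∪ X₂) : ℤ) = 2 * (X₁ ∪ X₂).card - 2 := hcritU
    omega
  exact ⟨X₁, X₂, hX1ss, hX2ss, hcrit1, hcrit2, hUeq, hv1, hv2, hy1, hz1, hx1, hx2, hz2, hy2⟩
end
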